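/- arXiv:2110.08686 — 3 statements merged into one kernel-verified Lean document; each statement's English description precedes it below -/
import Mathlib

section
/- Let 𝒮 = (ℝ × [−2,2]) ∖ {(t,x) ∈ ℝ² : (t−1)² + x² < 1} ⊆ ℝ², and define S : ℝ ⇒ ℝ by S(t) = {x ∈ ℝ : (t,x) ∈ 𝒮}. Then S is a smooth sweeping process (𝒮 is a connected 2-dimensional manifold with boundary whose boundary ∂𝒮 = (ℝ × {−2,2}) ∪ {(t,x) : (t−1)² + x² = 1} is a C¹ 1-dimensional submanifold of ℝ²), S is continuous on all of ℝ for the Hausdorff–Pompeiu metric, but H_S is discontinuous at t = 0. -/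
open Set Metric Filter MeasureTheory
open scoped ENNReal RealInnerProductSpace Topology Pointwise

section Preliminaries

variable {E : Type*} [NormedAddCommGroup E] [InnerProductSpace ℝ E]

/-- The graph `𝒮 = {(t,x) : x ∈ S t}` of a multivalued map `S : ℝ ⇒ E`. -/
def sgraph (S : ℝ → Set E) : Set (ℝ × E) := {p | p.2 ∈ S p.1}

/-- The effective domain of a multivalued map. -/
def sdom (S : ℝ → Set E) : Set ℝ := {t | (S t).Nonempty}

/-- The euclidean pairing on `ℝ × E`. -/
def pinner (p q : ℝ × E) : ℝ := p.1 * q.1 + ⟪p.2, q.2⟫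

/-- Fréchet normal cone of a set `C ⊆ E` at `x`. -/
def frechetNC (C : Set E) (x : E) : Set E :=
  {v | ∀ ε : ℝ, 0 < ε → ∃ δ : ℝ, 0 < δ ∧
    ∀ y ∈ C, ‖y - x‖ < δ → ⟪v, y - x⟫ ≤ ε * ‖y - x‖}

/-- Limiting (Mordukhovich) normal cone of a set `C ⊆ E` at `x`. -/
def limitingNC (C : Set E) (x : E) : Set E :=
  {v | ∃ xs vs : ℕ → E, (∀ i, xs i ∈ C) ∧ (∀ i, vs i ∈ frechetNC C (xs i)) ∧
    Tendsto xs atTop (𝓝 x) ∧ Tendsto vs atTop (𝓝 v)}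

/-- Fréchet normal cone of a set `C ⊆ ℝ × E` at `z` (w.r.t. the euclidean pairing). -/
def frechetNCP (C : Set (ℝ × E)) (z : ℝ × E) : Set (ℝ × E) :=
  {v | ∀ ε : ℝ, 0 < ε → ∃ δ : ℝ, 0 < δ ∧
    ∀ y ∈ C, ‖y - z‖ < δ → pinner v (y - z) ≤ ε * ‖y - z‖}

/-- Limiting normal cone of a set `C ⊆ ℝ × E` at `z`. -/
def limitingNCP (C : Set (ℝ × E)) (z : ℝ × E) : Set (ℝ × E) :=
  {v | ∃ zs vs : ℕ → ℝ × E, (∀ i, zs i ∈ C) ∧ (∀ i, vs i ∈ frechetNCP C (zs i)) ∧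
    Tendsto zs atTop (𝓝 z) ∧ Tendsto vs atTop (𝓝 v)}

/-- The (limiting) coderivative `D*S(t,x)(u) = {a : (a,-u) ∈ N_𝒮(t,x)}`. -/
def coderiv (S : ℝ → Set E) (t : ℝ) (x : E) (u : E) : Set ℝ :=
  {a | (a, -u) ∈ limitingNCP (sgraph S) (t, x)}

/-- Asymmetric (oriented) modulus `‖D*S(t,x)|⁺ = sup {a⁺ : a ∈ D*S(t,x)(u), ‖u‖ ≤ 1}`
(with `sup ∅ = 0`). -/
noncomputable def asymMod (S : ℝ → Set E) (t : ℝ) (x : E) : ℝ≥0∞ :=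
  ⨆ (u : E) (_ : ‖u‖ ≤ 1) (a : ℝ) (_ : a ∈ coderiv S t x u), ENNReal.ofReal a

/-- Modulus `‖D*S(t,x)‖⁺ = sup {|a| : a ∈ D*S(t,x)(u), ‖u‖ ≤ 1}` (with `sup ∅ = 0`). -/
noncomputable def symMod (S : ℝ → Set E) (t : ℝ) (x : E) : ℝ≥0∞ :=
  ⨆ (u : E) (_ : ‖u‖ ≤ 1) (a : ℝ) (_ : a ∈ coderiv S t x u), ENNReal.ofReal |a|

/-- Oriented talweg function `φ↑(t) = sup_{x ∈ S(t)} ‖D*S(t,x)|⁺`. -/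
noncomputable def orientedTalweg (S : ℝ → Set E) (t : ℝ) : ℝ≥0∞ :=
  ⨆ x ∈ S t, asymMod S t x

/-- Talweg function `φ(t) = sup_{x ∈ S(t)} ‖D*S(t,x)‖⁺`. -/
noncomputable def talweg (S : ℝ → Set E) (t : ℝ) : ℝ≥0∞ :=
  ⨆ x ∈ S t, symMod S t x

/-- `M` is a `C¹`-submanifold of codimension `c` of `ℝ × E`: locally it is the zero set
of a `C¹` submersion into `ℝ^c`. -/
def IsC1SubmanifoldCodim (c : ℕ) (M : Set (ℝ × E)) : Prop :=
  ∀ z ∈ M, ∃ U : Set (ℝ × E), IsOpen U ∧ z ∈ U ∧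
    ∃ f : ℝ × E → EuclideanSpace ℝ (Fin c),
      ContDiffOn ℝ 1 f U ∧ (∀ y ∈ U, Function.Surjective ⇑(fderivWithin ℝ f U y)) ∧
      M ∩ U = {y ∈ U | f y = 0}

/-- Smooth sweeping process: the graph `𝒮` is closed, connected, and either a `C¹`
submanifold of dimension at most `dim E` (i.e. codimension at least one), or a
full-dimensional manifold with boundary whose boundary `∂𝒮` (the topological frontier)
is a `C¹` submanifold of codimension one. -/
def SmoothSweepingProcess (S : ℝ → Set E) : Prop :=
  IsClosed (sgraph S) ∧ IsConnected (sgraph S) ∧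
    ((∃ c : ℕ, 1 ≤ c ∧ IsC1SubmanifoldCodim c (sgraph S)) ∨
      (sgraph S = closure (interior (sgraph S)) ∧
        IsC1SubmanifoldCodim 1 (frontier (sgraph S))))

/-- The map `H_S(t) = ∂𝒮 ∩ ({t} × E)`. -/
def HSmap (S : ℝ → Set E) (t : ℝ) : Set (ℝ × E) :=
  frontier (sgraph S) ∩ {p : ℝ × E | p.1 = t}

/-- Continuity at `t₀` (relative to `I`) of a set-valued map for the Hausdorff–Pompeiu
metric. -/
def HPContinuousAt {X : Type*} [PseudoEMetricSpace X] (F : ℝ → Set X) (I : Set ℝ)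
    (t₀ : ℝ) : Prop :=
  ∀ ε : ℝ, 0 < ε → ∃ δ : ℝ, 0 < δ ∧ ∀ t ∈ I, |t - t₀| < δ →
    EMetric.hausdorffEdist (F t) (F t₀) < ENNReal.ofReal ε

/-- Continuity on `I` of a set-valued map for the Hausdorff–Pompeiu metric. -/
def HPContinuousOn {X : Type*} [PseudoEMetricSpace X] (F : ℝ → Set X) (I : Set ℝ) : Prop :=
  ∀ t₀ ∈ I, HPContinuousAt F I t₀

/-- `γ` is absolutely continuous on `J` (with some integrable a.e. derivative). -/
def AbsContOn (γ : ℝ → E) (J : Set ℝ) : Prop :=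
  ∃ g : ℝ → E, IntegrableOn g J ∧ ∀ s ∈ J, ∀ t ∈ J, γ t - γ s = ∫ u in s..t, g u

/-- `γ` is piecewise absolutely continuous on `I`: its discontinuities are contained in a
closed countable set `D`, and `γ` is absolutely continuous on each connected component of
`I \ D`. -/
def PiecewiseAC (γ : ℝ → E) (I : Set ℝ) : Prop :=
  ∃ D : Set ℝ, IsClosed D ∧ D.Countable ∧
    ∀ t ∈ I \ D, AbsContOn γ (connectedComponentIn (I \ D) t)

/-- `γ` (an absolutely continuous curve, with a.e. derivative `γ'`) is an orbit of the
sweeping process defined by `S` on the interval `I`:  `γ(t) ∈ S(t)` on `I` and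
`-γ̇(t) ∈ N_{S(t)}(γ(t))` for a.e. `t ∈ I`. -/
def ACOrbit (S : ℝ → Set E) (I : Set ℝ) (γ γ' : ℝ → E) : Prop :=
  (∀ t ∈ I, γ t ∈ S t) ∧ IntegrableOn γ' I ∧
    (∀ s ∈ I, ∀ t ∈ I, γ t - γ s = ∫ u in s..t, γ' u) ∧
    (∀ᵐ t ∂(volume.restrict I), -γ' t ∈ limitingNC (S t) (γ t))

/-- `γ` (with a.e. derivative `γ'`) is a piecewise absolutely continuous orbit of the
sweeping process defined by `S` on `I`. -/
def PACOrbit (S : ℝ → Set E) (I : Set ℝ) (γ γ' : ℝ → E) : Prop :=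
  ∃ D : Set ℝ, IsClosed D ∧ D.Countable ∧
    ∀ t ∈ I \ D, ACOrbit S (connectedComponentIn (I \ D) t) γ γ'

/-- Assumption (A1): from every point `(t,x) ∈ 𝒮` with `‖D*S(t,x)|⁺ < ∞` there issues an
orbit of the sweeping process. -/
def AssumptionA1 (S : ℝ → Set E) : Prop :=
  ∀ t : ℝ, ∀ x ∈ S t, asymMod S t x < ⊤ →
    ∃ δ : ℝ, 0 < δ ∧ ∃ γ γ' : ℝ → E, ACOrbit S (Ico t (t + δ)) γ γ' ∧ γ t = x

/-- Assumption (A2) at `tb`: the oriented talweg is finite just to the right of `tb`. -/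
def AssumptionA2At (S : ℝ → Set E) (tb : ℝ) : Prop :=
  ∃ δ : ℝ, 0 < δ ∧ ∀ t ∈ Ioo tb (tb + δ), orientedTalweg S t < ⊤

/-- Assumption (A3) at `tb`: `H_S` is Hausdorff–Pompeiu continuous just to the right
of `tb`. -/
def AssumptionA3At (S : ℝ → Set E) (tb : ℝ) : Prop :=
  ∃ δ : ℝ, 0 < δ ∧ HPContinuousOn (HSmap S) (Ioo tb (tb + δ))

/-- The set `𝒯` of points of the domain at which (A2) and (A3) hold. -/
def goodSet (S : ℝ → Set E) : Set ℝ :=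
  {t | t ∈ sdom S ∧ AssumptionA2At S t ∧ AssumptionA3At S t}

/-- `S` has bounded values. -/
def BoundedValues (S : ℝ → Set E) : Prop := ∀ t, Bornology.IsBounded (S t)

/-- A catching-up sequence `{(tᵢ,xᵢ)}_{i ≥ 0}` for `S`. -/
def CatchingUp (S : ℝ → Set E) (t : ℕ → ℝ) (x : ℕ → E) : Prop :=
  StrictMono t ∧ (∀ i, x i ∈ S (t i)) ∧
    ∀ i, dist (x i) (x (i + 1)) = infDist (x i) (S (t (i + 1)))

/-- A finite catching-up sequence `{(tᵢ,xᵢ)}_{i=0}^k` for `S`. -/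
def FiniteCatchingUp (S : ℝ → Set E) (k : ℕ) (t : ℕ → ℝ) (x : ℕ → E) : Prop :=
  (∀ i < k, t i < t (i + 1)) ∧ (∀ i ≤ k, x i ∈ S (t i)) ∧
    ∀ i < k, dist (x i) (x (i + 1)) = infDist (x i) (S (t (i + 1)))

/-- A piecewise catching-up sequence for `S`: blocks `{(tʲᵢ,Yʲᵢ)}_{i=0}^{k_j}`, each a
catching-up sequence, with `tʲ_{k_j} = tʲ⁺¹₀`. -/
def PiecewiseCatchingUp (S : ℝ → Set E) (k : ℕ → ℕ) (t : ℕ → ℕ → ℝ) (Y : ℕ → ℕ → E) : Prop :=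
  (∀ j, FiniteCatchingUp S (k j) (t j) (Y j)) ∧ ∀ j, t j (k j) = t (j + 1) 0

/-- Outer semicontinuity of `S` at `tb`. -/
def OuterSemicontinuousAt (S : ℝ → Set E) (tb : ℝ) : Prop :=
  ∀ (tk : ℕ → ℝ) (xk : ℕ → E) (x : E), (∀ k, xk k ∈ S (tk k)) →
    Tendsto tk atTop (𝓝 tb) → Tendsto xk atTop (𝓝 x) → x ∈ S tb

/-- Inner semicontinuity of `S` at `tb`. -/
def InnerSemicontinuousAt (S : ℝ → Set E) (tb : ℝ) : Prop :=
  ∀ x ∈ S tb, ∀ tk : ℕ → ℝ, (∀ k, tk k ∈ sdom S) → Tendsto tk atTop (𝓝 tb) →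
    Tendsto (fun k => infDist x (S (tk k))) atTop (𝓝 0)

/-- The oriented calm graphical modulus `calm↑S(t,x)`. -/
noncomputable def calmUp (S : ℝ → Set E) (t : ℝ) (x : E) : ℝ :=
  sInf {κ : ℝ | 0 < κ ∧ ∃ ε : ℝ, 0 < ε ∧ ∃ δ : ℝ, 0 < δ ∧
    ∀ t₁ ∈ Ioo t (t + ε), S t ∩ ball x δ ⊆ S t₁ + ball (0 : E) (κ * (t₁ - t))}

end Preliminaries
section Statement9Aux

open ENNReal

/-- The graph set of the example. -/
def GGex : Set (ℝ × ℝ) := {p | p.2 ∈ Icc (-2:ℝ) 2 ∧ 1 ≤ (p.1 - 1) ^ 2 + p.2 ^ 2}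

/-- The claimed frontier. -/
def Gfrex : Set (ℝ × ℝ) :=
  ((univ : Set ℝ) ×ˢ ({-2, 2} : Set ℝ)) ∪ {p : ℝ × ℝ | (p.1 - 1) ^ 2 + p.2 ^ 2 = 1}

/-- The claimed interior. -/
def Gintex : Set (ℝ × ℝ) := {p | p.2 ∈ Ioo (-2:ℝ) 2 ∧ 1 < (p.1 - 1) ^ 2 + p.2 ^ 2}

lemma contf : Continuous (fun p : ℝ × ℝ => (p.1 - 1) ^ 2 + p.2 ^ 2) := by fun_prop

lemma isClosed_GGex : IsClosed GGex := by
  have : GGex = (Prod.snd ⁻¹' Icc (-2:ℝ) 2) ∩ {p : ℝ × ℝ | 1 ≤ (p.1 - 1) ^ 2 + p.2 ^ 2} := rfl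
  rw [this]
  exact (isClosed_Icc.preimage continuous_snd).inter (isClosed_le continuous_const contf)

lemma isOpen_Gintex : IsOpen Gintex := by
  have : Gintex = ({p : ℝ × ℝ | -2 < p.2} ∩ {p : ℝ × ℝ | p.2 < 2}) ∩
      {p : ℝ × ℝ | 1 < (p.1 - 1) ^ 2 + p.2 ^ 2} := by
    ext p; simp [Gintex, and_assoc]
  rw [this]
  exact (((isOpen_lt continuous_const continuous_snd).inter
    (isOpen_lt continuous_snd continuous_const)).inter (isOpen_lt continuous_const contf))

lemma Gintex_subset : Gintex ⊆ GGex := by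
  rintro p ⟨⟨h1, h2⟩, h3⟩
  exact ⟨⟨le_of_lt h1, le_of_lt h2⟩, le_of_lt h3⟩

lemma interior_GGex : interior GGex = Gintex := by
  apply subset_antisymm
  · intro z hz
    have hzG : z ∈ GGex := interior_subset hz
    obtain ⟨⟨hl, hr⟩, hf⟩ := hzG
    obtain ⟨ε, hε, hball⟩ := Metric.mem_nhds_iff.mp (mem_interior_iff_mem_nhds.mp hz)
    have h2 : z.2 < 2 := by
      by_contra hcon
      push_neg at hcon
      have hw : (z.1, z.2 + ε / 2) ∈ GGex := by
        apply hball
        rw [Metric.mem_ball, Prod.dist_eq]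
        apply max_lt
        · simpa using hε
        · rw [Real.dist_eq, show z.2 + ε / 2 - z.2 = ε / 2 by ring,
            abs_of_pos (half_pos hε)]
          linarith
      have : z.2 + ε / 2 ≤ 2 := hw.1.2
      linarith
    have h1 : -2 < z.2 := by
      by_contra hcon
      push_neg at hcon
      have hw : (z.1, z.2 - ε / 2) ∈ GGex := by
        apply hball
        rw [Metric.mem_ball, Prod.dist_eq]
        apply max_lt
        · simpa using hε
        · rw [Real.dist_eq, show z.2 - ε / 2 - z.2 = -(ε / 2) by ring, abs_neg,
            abs_of_pos (half_pos hε)]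
          linarith
      have : -2 ≤ z.2 - ε / 2 := hw.1.1
      linarith
    have h3 : 1 < (z.1 - 1) ^ 2 + z.2 ^ 2 := by
      rcases lt_or_eq_of_le hf with h | h
      · exact h
      · exfalso
        set c : ℝ := 1 - min ε 2 / 4 with hc
        clear_value c
        have hm0 : 0 < min ε 2 := lt_min hε (by norm_num)
        have hmε : min ε 2 ≤ ε := min_le_left _ _
        have hm2 : min ε 2 ≤ 2 := min_le_right _ _
        have h1c : 1 - c = min ε 2 / 4 := by simp [hc]
        have hc0 : 0 < c := by simp only [hc]; linarith
        have hc1 : c < 1 := by simp only [hc]; linarith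
        have ha1 : |z.1 - 1| ≤ 1 := by
          rw [abs_le]; constructor <;> nlinarith
        have ha2 : |z.2| ≤ 1 := by
          rw [abs_le]; constructor <;> nlinarith
        have hw : (1 + c * (z.1 - 1), c * z.2) ∈ GGex := by
          apply hball
          rw [Metric.mem_ball, Prod.dist_eq]
          have hd1 : dist (1 + c * (z.1 - 1)) z.1 = (1 - c) * |z.1 - 1| := by
            rw [Real.dist_eq, show 1 + c * (z.1 - 1) - z.1 = (1 - c) * -(z.1 - 1) by ring,
              abs_mul, abs_neg, abs_of_nonneg (by linarith : (0:ℝ) ≤ 1 - c)]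
          have hd2 : dist (c * z.2) z.2 = (1 - c) * |z.2| := by
            rw [Real.dist_eq, show c * z.2 - z.2 = (1 - c) * -z.2 by ring,
              abs_mul, abs_neg, abs_of_nonneg (by linarith : (0:ℝ) ≤ 1 - c)]
          rw [hd1, hd2]
          apply max_lt
          · calc (1 - c) * |z.1 - 1| ≤ (1 - c) * 1 :=
                mul_le_mul_of_nonneg_left ha1 (by linarith)
              _ < ε := by rw [mul_one, h1c]; linarith
          · calc (1 - c) * |z.2| ≤ (1 - c) * 1 :=
                mul_le_mul_of_nonneg_left ha2 (by linarith)
              _ < ε := by rw [mul_one, h1c]; linarith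
        have hwG : 1 ≤ (1 + c * (z.1 - 1) - 1) ^ 2 + (c * z.2) ^ 2 := hw.2
        have heq : (1 + c * (z.1 - 1) - 1) ^ 2 + (c * z.2) ^ 2
            = c ^ 2 * ((z.1 - 1) ^ 2 + z.2 ^ 2) := by ring
        rw [heq, ← h, mul_one] at hwG
        nlinarith
    exact ⟨⟨h1, h2⟩, h3⟩
  · exact interior_maximal Gintex_subset isOpen_Gintex

lemma closure_Gintex : closure Gintex = GGex := by
  apply subset_antisymm (closure_minimal Gintex_subset isClosed_GGex)
  intro z hz
  obtain ⟨⟨hl, hr⟩, hf⟩ := hz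
  rw [Metric.mem_closure_iff]
  intro ε hε
  rcases lt_or_eq_of_le hf with h1 | h1
  · by_cases h2 : -2 < z.2 ∧ z.2 < 2
    · exact ⟨z, ⟨⟨h2.1, h2.2⟩, h1⟩, by simpa using hε⟩
    · have habs : z.2 = 2 ∨ z.2 = -2 := by
        rcases lt_or_eq_of_le hl with h | h
        · rcases lt_or_eq_of_le hr with h' | h'
          · exact absurd ⟨h, h'⟩ h2
          · exact Or.inl h'
        · exact Or.inr h.symm
      set δ : ℝ := min ε 1 / 4 with hδdef
      clear_value δ
      have hm0 : 0 < min ε 1 := lt_min hε (by norm_num)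
      have hm1 : min ε 1 ≤ 1 := min_le_right _ _
      have hmε : min ε 1 ≤ ε := min_le_left _ _
      have hδ0 : 0 < δ := by simp only [hδdef]; linarith
      have hδ1 : δ ≤ 1 / 4 := by simp only [hδdef]; linarith
      have hδε : δ < ε := by simp only [hδdef]; linarith
      refine ⟨(z.1, (1 - δ) * z.2), ⟨⟨?_, ?_⟩, ?_⟩, ?_⟩
      · show -2 < (1 - δ) * z.2
        rcases habs with h | h <;> rw [h] <;> nlinarith
      · show (1 - δ) * z.2 < 2
        rcases habs with h | h <;> rw [h] <;> nlinarith
      · have hz4 : z.2 ^ 2 = 4 := by rcases habs with h | h <;> rw [h] <;> norm_num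
        show 1 < (z.1 - 1) ^ 2 + ((1 - δ) * z.2) ^ 2
        have h34 : (3:ℝ) / 4 ≤ 1 - δ := by linarith
        have hsq : (3/4 : ℝ) * (3/4) ≤ (1 - δ) * (1 - δ) :=
          mul_le_mul h34 h34 (by norm_num) (by linarith)
        nlinarith [sq_nonneg (z.1 - 1)]
      · rw [Prod.dist_eq]
        have hz2 : |z.2| = 2 := by rcases habs with h | h <;> rw [h] <;> norm_num
        have hd : dist z.2 ((1 - δ) * z.2) = δ * |z.2| := by
          rw [Real.dist_eq, show z.2 - (1 - δ) * z.2 = δ * z.2 by ring, abs_mul,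
            abs_of_nonneg (le_of_lt hδ0)]
        apply max_lt
        · simpa using hε
        · rw [hd, hz2]; linarith
  · -- on the circle
    have ha1 : |z.1 - 1| ≤ 1 := by rw [abs_le]; constructor <;> nlinarith
    have ha2 : |z.2| ≤ 1 := by rw [abs_le]; constructor <;> nlinarith
    set c : ℝ := 1 + min ε 1 / 4 with hcdef
    clear_value c
    have hm0 : 0 < min ε 1 := lt_min hε (by norm_num)
    have hm1 : min ε 1 ≤ 1 := min_le_right _ _
    have hmε : min ε 1 ≤ ε := min_le_left _ _
    have hc1 : 1 < c := by simp only [hcdef]; linarith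
    have hcu : c ≤ 5 / 4 := by simp only [hcdef]; linarith
    have hcε : c - 1 < ε := by simp only [hcdef]; linarith
    have hcz : |c * z.2| ≤ 5 / 4 := by
      rw [abs_mul, abs_of_pos (by linarith : (0:ℝ) < c)]
      calc c * |z.2| ≤ (5/4) * 1 := mul_le_mul hcu ha2 (abs_nonneg _) (by norm_num)
        _ = 5 / 4 := by norm_num
    obtain ⟨hcz1, hcz2⟩ := abs_le.mp hcz
    refine ⟨(1 + c * (z.1 - 1), c * z.2), ⟨⟨?_, ?_⟩, ?_⟩, ?_⟩
    · show -2 < c * z.2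
      linarith
    · show c * z.2 < 2
      linarith
    · show 1 < (1 + c * (z.1 - 1) - 1) ^ 2 + (c * z.2) ^ 2
      have heq : (1 + c * (z.1 - 1) - 1) ^ 2 + (c * z.2) ^ 2
          = c ^ 2 * ((z.1 - 1) ^ 2 + z.2 ^ 2) := by ring
      rw [heq, ← h1, mul_one]
      nlinarith
    · rw [Prod.dist_eq]
      have hd1 : dist z.1 (1 + c * (z.1 - 1)) = (c - 1) * |z.1 - 1| := by
        rw [Real.dist_eq, show z.1 - (1 + c * (z.1 - 1)) = (c - 1) * -(z.1 - 1) by ring,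
          abs_mul, abs_neg, abs_of_nonneg (by linarith : (0:ℝ) ≤ c - 1)]
      have hd2 : dist z.2 (c * z.2) = (c - 1) * |z.2| := by
        rw [Real.dist_eq, show z.2 - c * z.2 = (c - 1) * -z.2 by ring,
          abs_mul, abs_neg, abs_of_nonneg (by linarith : (0:ℝ) ≤ c - 1)]
      rw [hd1, hd2]
      apply max_lt
      · calc (c - 1) * |z.1 - 1| ≤ (c - 1) * 1 :=
            mul_le_mul_of_nonneg_left ha1 (by linarith)
          _ < ε := by rw [mul_one]; linarith
      · calc (c - 1) * |z.2| ≤ (c - 1) * 1 :=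
            mul_le_mul_of_nonneg_left ha2 (by linarith)
          _ < ε := by rw [mul_one]; linarith

lemma frontier_GGex : frontier GGex = Gfrex := by
  rw [isClosed_GGex.frontier_eq, interior_GGex]
  ext z
  simp only [GGex, Gintex, Gfrex, mem_diff, mem_setOf_eq, mem_Icc, mem_Ioo, mem_union,
    mem_prod, mem_univ, true_and, mem_insert_iff, mem_singleton_iff, not_and, not_lt]
  constructor
  · rintro ⟨⟨⟨hl, hr⟩, hf⟩, hni⟩
    by_cases h2 : -2 < z.2 ∧ z.2 < 2
    · right
      have := hni h2
      linarith
    · left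
      rcases lt_or_eq_of_le hl with h | h
      · rcases lt_or_eq_of_le hr with h' | h'
        · exact absurd ⟨h, h'⟩ h2
        · exact Or.inr h'
      · exact Or.inl h.symm
  · rintro (h | h)
    · rcases h with h | h <;> rw [h] <;>
        exact ⟨⟨by norm_num, by nlinarith [sq_nonneg (z.1 - 1)]⟩, by rintro ⟨h1, h2⟩ <;> linarith⟩
    · have ha2 : |z.2| ≤ 1 := by rw [abs_le]; constructor <;> nlinarith
      have h1 : -2 ≤ z.2 := by rw [abs_le] at ha2; linarith [ha2.1]
      have h2 : z.2 ≤ 2 := by rw [abs_le] at ha2; linarith [ha2.2]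
      exact ⟨⟨⟨h1, h2⟩, le_of_eq h.symm⟩, fun _ => le_of_eq h⟩

/-- The standard identification of `EuclideanSpace ℝ (Fin 1)` with `ℝ`. -/
noncomputable def e1ex : EuclideanSpace ℝ (Fin 1) ≃L[ℝ] ℝ :=
  (EuclideanSpace.equiv (Fin 1) ℝ).trans (ContinuousLinearEquiv.funUnique (Fin 1) ℝ ℝ)

lemma surj_of_ne_ex {D : ℝ × ℝ →L[ℝ] ℝ} {v : ℝ × ℝ} (h : D v ≠ 0) : Function.Surjective D :=
  fun r => ⟨(r / D v) • v, by rw [ContinuousLinearMap.map_smul, smul_eq_mul,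
    div_mul_cancel₀ _ h]⟩

lemma chart_helper_ex {M U : Set (ℝ × ℝ)} (hU : IsOpen U) {g : ℝ × ℝ → ℝ}
    (hg : ContDiff ℝ 1 g) (hsurj : ∀ y ∈ U, Function.Surjective (fderiv ℝ g y))
    (hMU : M ∩ U = {y ∈ U | g y = 0}) :
    ∃ f : ℝ × ℝ → EuclideanSpace ℝ (Fin 1), ContDiffOn ℝ 1 f U ∧
      (∀ y ∈ U, Function.Surjective ⇑(fderivWithin ℝ f U y)) ∧ M ∩ U = {y ∈ U | f y = 0} := by
  refine ⟨⇑e1ex.symm ∘ g, (e1ex.symm.contDiff.comp hg).contDiffOn, ?_, ?_⟩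
  · intro y hy
    rw [fderivWithin_of_isOpen hU hy, e1ex.symm.comp_fderiv]
    simp only [ContinuousLinearMap.coe_comp']
    exact (e1ex.symm.surjective).comp (hsurj y hy)
  · rw [hMU]
    ext y
    simp only [mem_setOf_eq, Function.comp_apply, and_congr_right_iff]
    intro _
    exact ⟨fun h => by simp [Function.comp, h], fun h => e1ex.symm.map_eq_zero_iff.mp h⟩

lemma submanifold_Gfrex : ∀ z ∈ Gfrex, ∃ U : Set (ℝ × ℝ), IsOpen U ∧ z ∈ U ∧
    ∃ f : ℝ × ℝ → EuclideanSpace ℝ (Fin 1), ContDiffOn ℝ 1 f U ∧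
      (∀ y ∈ U, Function.Surjective ⇑(fderivWithin ℝ f U y)) ∧
      Gfrex ∩ U = {y ∈ U | f y = 0} := by
  intro z hz
  rcases hz with hz | hz
  · simp only [mem_prod, mem_univ, true_and, mem_insert_iff, mem_singleton_iff] at hz
    rcases hz with hz | hz
    · -- bottom line z.2 = -2
      refine ⟨{p : ℝ × ℝ | p.2 < -3/2}, isOpen_lt continuous_snd continuous_const,
        by rw [mem_setOf_eq, hz]; norm_num, ?_⟩
      apply chart_helper_ex (g := fun p => p.2 + 2)
      · exact isOpen_lt continuous_snd continuous_const
      · exact contDiff_snd.add contDiff_const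
      · intro y _
        have hD : fderiv ℝ (fun p : ℝ × ℝ => p.2 + 2) y = ContinuousLinearMap.snd ℝ ℝ ℝ :=
          (hasFDerivAt_snd.add_const 2).fderiv
        rw [hD]
        exact surj_of_ne_ex (v := ((0:ℝ), (1:ℝ))) (by simp)
      · ext y
        simp only [Gfrex, mem_inter_iff, mem_union, mem_prod, mem_univ, true_and,
          mem_insert_iff, mem_singleton_iff, mem_setOf_eq]
        constructor
        · rintro ⟨h | h, hU⟩
          · rcases h with h | h
            · exact ⟨hU, by linarith⟩
            · exfalso; rw [h] at hU; norm_num at hU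
          · exfalso; nlinarith
        · rintro ⟨hU, h⟩
          exact ⟨Or.inl (Or.inl (by linarith)), hU⟩
    · -- top line z.2 = 2
      refine ⟨{p : ℝ × ℝ | 3/2 < p.2}, isOpen_lt continuous_const continuous_snd,
        by rw [mem_setOf_eq, hz]; norm_num, ?_⟩
      apply chart_helper_ex (g := fun p => p.2 - 2)
      · exact isOpen_lt continuous_const continuous_snd
      · exact contDiff_snd.sub contDiff_const
      · intro y _
        have hD : fderiv ℝ (fun p : ℝ × ℝ => p.2 - 2) y = ContinuousLinearMap.snd ℝ ℝ ℝ :=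
          (hasFDerivAt_snd.sub_const 2).fderiv
        rw [hD]
        exact surj_of_ne_ex (v := ((0:ℝ), (1:ℝ))) (by simp)
      · ext y
        simp only [Gfrex, mem_inter_iff, mem_union, mem_prod, mem_univ, true_and,
          mem_insert_iff, mem_singleton_iff, mem_setOf_eq]
        constructor
        · rintro ⟨h | h, hU⟩
          · rcases h with h | h
            · exfalso; rw [h] at hU; norm_num at hU
            · exact ⟨hU, by linarith⟩
          · exfalso; nlinarith
        · rintro ⟨hU, h⟩
          exact ⟨Or.inl (Or.inr (by linarith)), hU⟩
  · -- circle
    simp only [mem_setOf_eq] at hz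
    refine ⟨{p : ℝ × ℝ | 1/2 < (p.1 - 1) ^ 2 + p.2 ^ 2} ∩ {p : ℝ × ℝ | p.2 ^ 2 < 2},
      (isOpen_lt continuous_const contf).inter
        (isOpen_lt (continuous_snd.pow 2) continuous_const),
      ⟨by simp only [mem_setOf_eq]; linarith, by simp only [mem_setOf_eq]; nlinarith⟩, ?_⟩
    apply chart_helper_ex (g := fun p => (p.1 - 1) * (p.1 - 1) + p.2 * p.2 - 1)
    · exact (isOpen_lt continuous_const contf).inter
        (isOpen_lt (continuous_snd.pow 2) continuous_const)
    · fun_prop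
    · intro y hy
      obtain ⟨hy1, hy2⟩ := hy
      simp only [mem_setOf_eq] at hy1 hy2
      have h1 : HasFDerivAt (fun p : ℝ × ℝ => p.1 - 1) (ContinuousLinearMap.fst ℝ ℝ ℝ) y :=
        hasFDerivAt_fst.sub_const 1
      have h2 : HasFDerivAt (fun p : ℝ × ℝ => p.2) (ContinuousLinearMap.snd ℝ ℝ ℝ) y :=
        hasFDerivAt_snd
      have hD := (((h1.mul h1).add (h2.mul h2)).sub_const 1).fderiv
      rw [show fderiv ℝ (fun p : ℝ × ℝ => (p.1 - 1) * (p.1 - 1) + p.2 * p.2 - 1) y = _ from hD]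
      by_cases hy20 : y.2 = 0
      · apply surj_of_ne_ex (v := ((1:ℝ), (0:ℝ)))
        simp only [ContinuousLinearMap.sub_apply, ContinuousLinearMap.add_apply,
          ContinuousLinearMap.smul_apply, ContinuousLinearMap.coe_fst',
          ContinuousLinearMap.coe_snd', smul_eq_mul]
        rw [hy20] at hy1 ⊢
        intro hcon
        nlinarith
      · apply surj_of_ne_ex (v := ((0:ℝ), (1:ℝ)))
        simp only [ContinuousLinearMap.add_apply, ContinuousLinearMap.smul_apply,
          ContinuousLinearMap.coe_fst', ContinuousLinearMap.coe_snd', smul_eq_mul]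
        intro hcon
        apply hy20
        nlinarith [sq_nonneg y.2]
    · ext y
      simp only [Gfrex, mem_inter_iff, mem_union, mem_prod, mem_univ, true_and,
        mem_insert_iff, mem_singleton_iff, mem_setOf_eq]
      constructor
      · rintro ⟨h | h, hU1, hU2⟩
        · exfalso
          rcases h with h | h <;> rw [h] at hU2 <;> norm_num at hU2
        · exact ⟨⟨hU1, hU2⟩, by nlinarith⟩
      · rintro ⟨⟨hU1, hU2⟩, h⟩
        exact ⟨Or.inr (by nlinarith), hU1, hU2⟩

lemma seg_joined_ex {p q : ℝ × ℝ} (hsub : segment ℝ p q ⊆ GGex) : JoinedIn GGex p q :=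
  (((convex_segment p q).isPathConnected ⟨p, left_mem_segment ℝ p q⟩).joinedIn p
    (left_mem_segment ℝ p q) q (right_mem_segment ℝ p q)).mono hsub

lemma isConnected_GGex : IsConnected GGex := by
  have hb : ((0:ℝ), (2:ℝ)) ∈ GGex := by
    refine ⟨⟨by norm_num, by norm_num⟩, by norm_num⟩
  apply IsPathConnected.isConnected
  refine ⟨((0:ℝ), (2:ℝ)), hb, ?_⟩
  have key : ∀ z ∈ GGex, 0 ≤ z.2 → JoinedIn GGex z ((0:ℝ), (2:ℝ)) := by
    intro z hz hz0
    obtain ⟨⟨hl, hr⟩, hf⟩ := hz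
    have j1 : JoinedIn GGex z (z.1, 2) := by
      apply seg_joined_ex
      rintro y ⟨a, b, ha, hb, hab, hy⟩
      have hy1 : y.1 = a * z.1 + b * z.1 := by rw [← hy]; rfl
      have hy2 : y.2 = a * z.2 + b * 2 := by rw [← hy]; rfl
      have hy1' : y.1 = z.1 := by rw [hy1]; linear_combination z.1 * hab
      have habz : a * z.2 + b * z.2 = z.2 := by linear_combination z.2 * hab
      have hs2 : z.2 ≤ y.2 := by
        rw [hy2]
        linarith [mul_nonneg hb (show (0:ℝ) ≤ 2 - z.2 by linarith)]
      have hsle : y.2 ≤ 2 := by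
        rw [hy2]
        linarith [mul_nonneg ha (show (0:ℝ) ≤ 2 - z.2 by linarith)]
      have hss : z.2 * z.2 ≤ y.2 * y.2 := mul_self_le_mul_self hz0 hs2
      refine ⟨⟨by linarith, hsle⟩, ?_⟩
      rw [hy1']
      nlinarith [hf, hss]
    have j2 : JoinedIn GGex (z.1, 2) ((0:ℝ), (2:ℝ)) := by
      apply seg_joined_ex
      rintro y ⟨a, b, ha, hb, hab, hy⟩
      have hy2 : y.2 = a * 2 + b * 2 := by rw [← hy]; rfl
      have hy2' : y.2 = 2 := by rw [hy2]; linear_combination 2 * hab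
      refine ⟨⟨by rw [hy2']; norm_num, by rw [hy2']⟩, ?_⟩
      rw [hy2']
      nlinarith [sq_nonneg (y.1 - 1)]
    exact j1.trans j2
  have keyneg : ∀ z ∈ GGex, z.2 ≤ 0 → JoinedIn GGex z ((0:ℝ), (2:ℝ)) := by
    intro z hz hz0
    obtain ⟨⟨hl, hr⟩, hf⟩ := hz
    have j1 : JoinedIn GGex z (z.1, -2) := by
      apply seg_joined_ex
      rintro y ⟨a, b, ha, hb, hab, hy⟩
      have hy1 : y.1 = a * z.1 + b * z.1 := by rw [← hy]; rfl
      have hy2 : y.2 = a * z.2 + b * (-2) := by rw [← hy]; rfl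
      have hy1' : y.1 = z.1 := by rw [hy1]; linear_combination z.1 * hab
      have habz : a * z.2 + b * z.2 = z.2 := by linear_combination z.2 * hab
      have hs2 : y.2 ≤ z.2 := by
        rw [hy2]
        linarith [mul_nonneg hb (show (0:ℝ) ≤ z.2 + 2 by linarith)]
      have hsle : -2 ≤ y.2 := by
        rw [hy2]
        linarith [mul_nonneg ha (show (0:ℝ) ≤ z.2 + 2 by linarith)]
      have hss : z.2 * z.2 ≤ y.2 * y.2 := by nlinarith
      refine ⟨⟨hsle, by linarith⟩, ?_⟩
      rw [hy1']
      nlinarith [hf, hss]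
    have j2 : JoinedIn GGex (z.1, -2) ((0:ℝ), (-2:ℝ)) := by
      apply seg_joined_ex
      rintro y ⟨a, b, ha, hb, hab, hy⟩
      have hy2 : y.2 = a * (-2) + b * (-2) := by rw [← hy]; rfl
      have hy2' : y.2 = -2 := by rw [hy2]; linear_combination (-2) * hab
      refine ⟨⟨by rw [hy2'], by rw [hy2']; norm_num⟩, ?_⟩
      rw [hy2']
      nlinarith [sq_nonneg (y.1 - 1)]
    have j3 : JoinedIn GGex ((0:ℝ), (-2:ℝ)) ((0:ℝ), (2:ℝ)) := by
      apply seg_joined_ex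
      rintro y ⟨a, b, ha, hb, hab, hy⟩
      have hy1 : y.1 = a * 0 + b * 0 := by rw [← hy]; rfl
      have hy2 : y.2 = a * (-2) + b * 2 := by rw [← hy]; rfl
      have hy1' : y.1 = 0 := by rw [hy1]; ring
      refine ⟨⟨by rw [hy2]; linarith, by rw [hy2]; linarith⟩, ?_⟩
      rw [hy1']
      nlinarith [sq_nonneg y.2]
    exact (j1.trans j2).trans j3
  intro z hz
  rcases le_total 0 z.2 with h | h
  · exact (key z hz h).symm
  · exact (keyneg z hz h).symm

/-- The radius function. -/
noncomputable def rrex (t : ℝ) : ℝ := Real.sqrt (1 - (t - 1) ^ 2)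

lemma rrex_nonneg (t : ℝ) : 0 ≤ rrex t := Real.sqrt_nonneg _

lemma rrex_le_one (t : ℝ) : rrex t ≤ 1 := by
  exact Real.sqrt_le_iff.mpr ⟨zero_le_one, by nlinarith [sq_nonneg (t - 1)]⟩

lemma mem_S_iff_ex (t x : ℝ) :
    (x ∈ Icc (-2:ℝ) 2 ∧ ¬((t - 1) ^ 2 + x ^ 2 < 1)) ↔ (x ∈ Icc (-2:ℝ) 2 ∧ rrex t ≤ |x|) := by
  have : rrex t ≤ |x| ↔ 1 - (t - 1) ^ 2 ≤ x ^ 2 := by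
    rw [rrex, Real.sqrt_le_iff]
    constructor
    · rintro ⟨_, h⟩; rwa [sq_abs] at h
    · intro h; exact ⟨abs_nonneg x, by rwa [sq_abs]⟩
  rw [this, not_lt]
  constructor
  · rintro ⟨h1, h2⟩; exact ⟨h1, by linarith⟩
  · rintro ⟨h1, h2⟩; exact ⟨h1, by linarith⟩

lemma excess_ex (t t' x : ℝ) (hx : x ∈ Icc (-2:ℝ) 2 ∧ rrex t ≤ |x|) :
    ∃ y, (y ∈ Icc (-2:ℝ) 2 ∧ rrex t' ≤ |y|) ∧ |x - y| ≤ |rrex t - rrex t'| := by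
  by_cases h : rrex t' ≤ |x|
  · exact ⟨x, ⟨hx.1, h⟩, by simp [abs_nonneg]⟩
  · push_neg at h
    obtain ⟨⟨hl, hr⟩, hrt⟩ := hx
    have h1' : rrex t' ≤ 1 := rrex_le_one t'
    have h0' : 0 ≤ rrex t' := rrex_nonneg t'
    rcases le_or_gt 0 x with hx0 | hx0
    · have hax : |x| = x := abs_of_nonneg hx0
      refine ⟨rrex t', ⟨⟨by linarith, by linarith⟩, by rw [abs_of_nonneg h0']⟩, ?_⟩
      rw [abs_of_nonpos (by rw [hax] at h; linarith), abs_of_nonpos (by rw [hax] at hrt; linarith)]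
      rw [hax] at hrt
      linarith
    · have hax : |x| = -x := abs_of_neg hx0
      refine ⟨-(rrex t'), ⟨⟨by linarith, by linarith⟩, by rw [abs_neg, abs_of_nonneg h0']⟩, ?_⟩
      rw [hax] at h hrt
      rw [show x - -(rrex t') = rrex t' - (-x) by ring, abs_of_nonneg (by linarith),
        abs_of_nonpos (by linarith)]
      linarith

lemma hdist_le_ex (t t' : ℝ) :
    EMetric.hausdorffEdist {x : ℝ | x ∈ Icc (-2:ℝ) 2 ∧ ¬((t - 1) ^ 2 + x ^ 2 < 1)}
      {x : ℝ | x ∈ Icc (-2:ℝ) 2 ∧ ¬((t' - 1) ^ 2 + x ^ 2 < 1)} ≤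
      ENNReal.ofReal |rrex t - rrex t'| := by
  apply EMetric.hausdorffEdist_le_of_mem_edist
  · intro x hx
    rw [mem_setOf_eq, mem_S_iff_ex] at hx
    obtain ⟨y, hy, hxy⟩ := excess_ex t t' x hx
    refine ⟨y, by rw [mem_setOf_eq, mem_S_iff_ex]; exact hy, ?_⟩
    rw [edist_dist, Real.dist_eq]
    exact ENNReal.ofReal_le_ofReal hxy
  · intro x hx
    rw [mem_setOf_eq, mem_S_iff_ex] at hx
    obtain ⟨y, hy, hxy⟩ := excess_ex t' t x hx
    refine ⟨y, by rw [mem_setOf_eq, mem_S_iff_ex]; exact hy, ?_⟩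
    rw [edist_dist, Real.dist_eq, abs_sub_comm (rrex t)]
    exact ENNReal.ofReal_le_ofReal hxy

lemma continuous_rrex : Continuous rrex := by
  apply Real.continuous_sqrt.comp
  fun_prop

end Statement9Aux
/-- Remark: the converse of Proposition `H_S` continuous ⇒ `S`
continuous fails: for `𝒮 = (ℝ × [-2,2]) \ {(t,x) : (t-1)² + x² < 1}`, the map `S` is a
smooth sweeping process (with `∂𝒮 = (ℝ × {-2,2}) ∪ {(t-1)² + x² = 1}` a `C¹` curve),
`S` is Hausdorff–Pompeiu continuous on all of `ℝ`, but `H_S` is discontinuous at `0`. -/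
theorem statement9 (S : ℝ → Set ℝ)
    (hSdef : S = fun t => {x : ℝ | x ∈ Icc (-2 : ℝ) 2 ∧ ¬((t - 1) ^ 2 + x ^ 2 < 1)}) :
    SmoothSweepingProcess S ∧
    frontier (sgraph S) =
      ((univ : Set ℝ) ×ˢ ({-2, 2} : Set ℝ)) ∪
        {p : ℝ × ℝ | (p.1 - 1) ^ 2 + p.2 ^ 2 = 1} ∧
    IsC1SubmanifoldCodim 1 (frontier (sgraph S)) ∧
    HPContinuousOn S (univ : Set ℝ) ∧
    ¬ HPContinuousAt (HSmap S) (univ : Set ℝ) 0 := by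
  have hg : sgraph S = GGex := by
    rw [hSdef]
    ext p
    simp only [sgraph, GGex, mem_setOf_eq, not_lt]
  have hfr : frontier (sgraph S) = Gfrex := by rw [hg, frontier_GGex]
  refine ⟨⟨?_, ?_, Or.inr ⟨?_, ?_⟩⟩, ?_, ?_, ?_, ?_⟩
  · rw [hg]; exact isClosed_GGex
  · rw [hg]; exact isConnected_GGex
  · rw [hg, interior_GGex, closure_Gintex]
  · rw [hfr]; exact submanifold_Gfrex
  · rw [hfr]; rfl
  · rw [hfr]; exact submanifold_Gfrex
  · -- HP continuity of S
    intro t₀ _ ε hε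
    obtain ⟨δ, hδ0, hδ⟩ := Metric.continuousAt_iff.mp continuous_rrex.continuousAt
      (ε / 2) (half_pos hε)
    refine ⟨δ, hδ0, ?_⟩
    intro t _ ht
    have h1 : |rrex t - rrex t₀| < ε / 2 := by
      have := hδ (show dist t t₀ < δ by rwa [Real.dist_eq])
      rwa [Real.dist_eq] at this
    calc EMetric.hausdorffEdist (S t) (S t₀)
        ≤ ENNReal.ofReal |rrex t - rrex t₀| := by rw [hSdef]; exact hdist_le_ex t t₀
      _ < ENNReal.ofReal ε := (ENNReal.ofReal_lt_ofReal_iff hε).mpr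
          (by linarith [abs_nonneg (rrex t - rrex t₀)])
  · -- discontinuity of H_S at 0
    intro hcont
    obtain ⟨δ, hδ0, h⟩ := hcont 1 one_pos
    have ht := h (-(δ / 2)) (mem_univ _)
      (by rw [sub_zero, abs_neg, abs_of_pos (half_pos hδ0)]; linarith)
    have hmem : ((0:ℝ), (0:ℝ)) ∈ HSmap S 0 := by
      refine ⟨?_, rfl⟩
      rw [hfr]
      exact Or.inr (by norm_num [Gfrex])
    have hle : ENNReal.ofReal 1 ≤ EMetric.hausdorffEdist (HSmap S (-(δ / 2))) (HSmap S 0) := by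
      show ENNReal.ofReal 1 ≤ Metric.hausdorffEDist _ _
      rw [Metric.hausdorffEDist_comm]
      refine le_trans ?_ (EMetric.infEdist_le_hausdorffEdist_of_mem hmem)
      rw [EMetric.le_infEdist]
      intro y hy
      obtain ⟨hyfr, hy1⟩ := hy
      rw [hfr] at hyfr
      have hy1' : y.1 = -(δ / 2) := hy1
      have hy2 : y.2 = -2 ∨ y.2 = 2 := by
        rcases hyfr with h' | h'
        · simpa using h'.2
        · exfalso
          simp only [mem_setOf_eq] at h'
          rw [hy1'] at h'
          nlinarith [half_pos hδ0, sq_nonneg y.2]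
      have h2 : ENNReal.ofReal 1 ≤ edist ((0:ℝ)) y.2 := by
        rw [edist_dist, Real.dist_eq]
        apply ENNReal.ofReal_le_ofReal
        rcases hy2 with h' | h' <;> rw [h'] <;> norm_num
      calc ENNReal.ofReal 1 ≤ edist ((0:ℝ)) y.2 := h2
        _ ≤ edist (((0:ℝ), (0:ℝ)) : ℝ × ℝ) y := by
            rw [Prod.edist_eq]; exact le_max_right _ _
    exact absurd ht (not_lt.mpr hle)
end

section
/- Let S : ℝ ⇒ ℝⁿ be a smooth sweeping process, t̄ ∈ dom(S) with t̄ < sup(dom(S)), and x̄ ∈ S(t̄). If there exists δ > 0 such that x̄ ∈ S(t) for all t ∈ (t̄, t̄+δ), then α ≤ 0 for every (α,u) ∈ N_𝒮(t̄,x̄). -/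
open Set Metric Filter MeasureTheory
open scoped ENNReal RealInnerProductSpace Topology Pointwise

section Helpers

variable {E : Type*} [NormedAddCommGroup E] [InnerProductSpace ℝ E]

lemma pinner_add_right (p q r : ℝ × E) : pinner p (q + r) = pinner p q + pinner p r := by
  simp [pinner, inner_add_right]; ring

lemma pinner_smul_right (p q : ℝ × E) (s : ℝ) : pinner p (s • q) = s * pinner p q := by
  simp [pinner, inner_smul_right]; ring

lemma pinner_sub_right (p q r : ℝ × E) : pinner p (q - r) = pinner p q - pinner p r := by
  simp [pinner, inner_sub_right]; ring

lemma pinner_comm (p q : ℝ × E) : pinner p q = pinner q p := by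
  simp [pinner, real_inner_comm, mul_comm]

lemma abs_pinner_le (p q : ℝ × E) : |pinner p q| ≤ (|p.1| + ‖p.2‖) * ‖q‖ := by
  have h1 : |p.1 * q.1| ≤ |p.1| * ‖q‖ := by
    rw [abs_mul]
    have : |q.1| ≤ ‖q‖ := by simpa [Real.norm_eq_abs] using norm_fst_le q
    exact mul_le_mul_of_nonneg_left this (abs_nonneg _)
  have h2 : |⟪p.2, q.2⟫| ≤ ‖p.2‖ * ‖q‖ := by
    refine (abs_real_inner_le_norm _ _).trans ?_
    exact mul_le_mul_of_nonneg_left (norm_snd_le q) (norm_nonneg _)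
  calc |pinner p q| ≤ |p.1 * q.1| + |⟪p.2, q.2⟫| := abs_add_le _ _
    _ ≤ |p.1| * ‖q‖ + ‖p.2‖ * ‖q‖ := add_le_add h1 h2
    _ = (|p.1| + ‖p.2‖) * ‖q‖ := by ring

lemma pinner_self (p : ℝ × E) : pinner p p = p.1 ^ 2 + ‖p.2‖ ^ 2 := by
  simp [pinner, real_inner_self_eq_norm_sq]; ring

lemma pinner_self_pos {p : ℝ × E} (hp : p ≠ 0) : 0 < pinner p p := by
  rw [pinner_self]
  have h0 : p.1 ≠ 0 ∨ p.2 ≠ 0 := by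
    by_contra h
    push_neg at h
    exact hp (Prod.ext h.1 h.2)
  rcases h0 with h | h
  · have : 0 < p.1 ^ 2 := by positivity
    nlinarith [sq_nonneg ‖p.2‖]
  · have : 0 < ‖p.2‖ := norm_pos_iff.2 h
    nlinarith [sq_nonneg p.1]

/-- If there are points of `C` in direction `h` at arbitrarily small scales, then any
Fréchet normal pairs `≤ 0` with `h`. -/
lemma pinner_le_zero_of_dir {C : Set (ℝ × E)} {z v : ℝ × E}
    (hv : v ∈ frechetNCP C z) (h : ℝ × E)
    (ht : ∀ ε : ℝ, 0 < ε → ∃ s : ℝ, 0 < s ∧ s ≤ ε ∧ ∃ y ∈ C, ‖y - z - s • h‖ ≤ ε * s) :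
    pinner v h ≤ 0 := by
  by_contra hm
  push_neg at hm
  set m := pinner v h with hmdef
  set Cv := |v.1| + ‖v.2‖ with hCv
  have hCv0 : 0 ≤ Cv := by positivity
  set B := ‖h‖ + 1 with hB
  have hB0 : (0:ℝ) < B := by positivity
  obtain ⟨δ, hδ, hfre⟩ := hv (m / (2 * B)) (by positivity)
  set ε := min (min 1 (m / (4 * (Cv + 1)))) (δ / (2 * B)) with hε
  have hε0 : 0 < ε := lt_min (lt_min one_pos (by positivity)) (by positivity)
  obtain ⟨s, hs0, hsε, y, hyC, hy⟩ := ht ε hε0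
  have hε1 : ε ≤ 1 := by rw [hε]; exact (min_le_left _ _).trans (min_le_left _ _)
  have hεm : ε ≤ m / (4 * (Cv + 1)) := by
    rw [hε]; exact (min_le_left _ _).trans (min_le_right _ _)
  have hεδ : ε ≤ δ / (2 * B) := by rw [hε]; exact min_le_right _ _
  clear_value m Cv B ε
  have h1 : ‖y - z‖ ≤ s * B := by
    have he : y - z = (y - z - s • h) + s • h := by abel
    have : ‖y - z‖ ≤ ‖y - z - s • h‖ + ‖s • h‖ := by
      simpa using norm_add_le (y - z - s • h) (s • h)
    have h2 : ‖s • h‖ = s * ‖h‖ := by rw [norm_smul, Real.norm_eq_abs, abs_of_pos hs0]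
    have h3 : ε * s ≤ s := by nlinarith
    rw [h2] at this
    nlinarith
  have h2 : ‖y - z‖ < δ := by
    have : s * B ≤ ε * B := by nlinarith
    have h4 : ε * B ≤ δ / 2 := by
      have := mul_le_mul_of_nonneg_right hεδ (le_of_lt hB0)
      calc ε * B ≤ δ / (2 * B) * B := this
        _ = δ / 2 := by field_simp
    nlinarith
  have h3 := hfre y hyC h2
  have h4 : pinner v (y - z) = s * m + pinner v (y - z - s • h) := by
    have e1 : (y - z) - (y - z - s • h) = s • h := by abel
    have e2 := pinner_sub_right v (y - z) (y - z - s • h)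
    rw [e1, pinner_smul_right] at e2
    rw [hmdef]
    linarith [e2]
  have h5 : |pinner v (y - z - s • h)| ≤ Cv * (ε * s) :=
    calc |pinner v (y - z - s • h)| ≤ (|v.1| + ‖v.2‖) * ‖y - z - s • h‖ := abs_pinner_le _ _
      _ = Cv * ‖y - z - s • h‖ := by rw [hCv]
      _ ≤ Cv * (ε * s) := mul_le_mul_of_nonneg_left hy hCv0
  have h6 : m / (2 * B) * ‖y - z‖ ≤ m / (2 * B) * (s * B) :=
    mul_le_mul_of_nonneg_left h1 (by positivity)
  have h7 : m / (2 * B) * (s * B) = s * (m / 2) := by field_simp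
  have h8 : s * m - Cv * (ε * s) ≤ s * (m / 2) := by
    have h5' := (abs_le.1 h5).1
    linarith [h3, h4, h6, h7, h5']
  have h9 : m / 2 ≤ Cv * ε := by
    have := (mul_le_mul_iff_right₀ hs0).mp (by nlinarith [h8] : s * (m / 2) ≤ s * (Cv * ε))
    linarith
  have h10 : Cv * ε ≤ Cv * (m / (4 * (Cv + 1))) := mul_le_mul_of_nonneg_left hεm hCv0
  have h11 : Cv * (m / (4 * (Cv + 1))) < m / 2 := by
    have hpos : (0:ℝ) < 4 * (Cv + 1) := by positivity
    have e : Cv * (m / (4 * (Cv + 1))) = (Cv * m) / (4 * (Cv + 1)) := by ring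
    rw [e, div_lt_iff₀ hpos]
    nlinarith [mul_nonneg hCv0 hm.le]
  linarith

end Helpers

section IFT

variable {E : Type*} [NormedAddCommGroup E] [InnerProductSpace ℝ E] [FiniteDimensional ℝ E]
variable {G : Type*} [NormedAddCommGroup G] [NormedSpace ℝ G] [FiniteDimensional ℝ G]

/-- Tangent realization: near a regular zero of `f`, every kernel direction is realized
by zeros of `f` at small scales. -/
lemma exists_dir_points {f : ℝ × E → G} {A : (ℝ × E) →L[ℝ] G} {a : ℝ × E}
    (hf : HasStrictFDerivAt f A a) (hsurj : LinearMap.range (A : (ℝ × E) →ₗ[ℝ] G) = ⊤) (hfa : f a = 0)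
    {h : ℝ × E} (hh : A h = 0) {U : Set (ℝ × E)} (hU : U ∈ 𝓝 a) :
    ∀ ε : ℝ, 0 < ε → ∃ s : ℝ, 0 < s ∧ s ≤ ε ∧ ∃ y, y ∈ U ∧ f y = 0 ∧
      ‖y - a - s • h‖ ≤ ε * s := by
  intro ε hε
  set kh : A.ker := ⟨h, hh⟩ with hkh
  set g : A.ker → ℝ × E := hf.implicitFunction f A hsurj 0 with hg
  have himpl : HasStrictFDerivAt g (A.ker).subtypeL 0 := by
    have := hf.to_implicitFunction hsurj
    rwa [hfa] at this
  have h0 : g 0 = a := by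
    have := hf.implicitFunction_apply_image hsurj
    rw [hfa] at this
    exact this
  have hsm : Tendsto (fun s : ℝ => s • kh) (𝓝 0) (𝓝 0) := by
    have : Tendsto (fun s : ℝ => s • kh) (𝓝 0) (𝓝 ((0:ℝ) • kh)) :=
      (tendsto_id.smul_const kh)
    simpa using this
  have htend : Tendsto (fun s : ℝ => ((0:G), s • kh)) (𝓝 0)
      (𝓝 ((0:G), (0 : A.ker))) := tendsto_const_nhds.prodMk_nhds hsm
  have hmap := hf.map_implicitFunction_eq hsurj
  rw [hfa] at hmap
  have hev1 : ∀ᶠ s : ℝ in 𝓝 0, f (g (s • kh)) = 0 := htend.eventually hmap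
  have hev2 : ∀ᶠ s : ℝ in 𝓝 0, g (s • kh) ∈ U := by
    have : Tendsto (fun s : ℝ => g (s • kh)) (𝓝 0) (𝓝 a) := by
      have := (himpl.continuousAt.tendsto).comp hsm
      rwa [h0] at this
    exact this.eventually_mem hU
  -- little-o estimate
  have hlo : (fun s : ℝ => g (s • kh) - a - s • h) =o[𝓝 0] (fun s : ℝ => s) := by
    have h1 : (fun k : A.ker => g (0 + k) - g 0 - (A.ker).subtypeL k)
        =o[𝓝 0] (fun k : A.ker => k) :=
      hasFDerivAt_iff_isLittleO_nhds_zero.mp himpl.hasFDerivAt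
    have h2 := h1.comp_tendsto hsm
    have h3 : (fun s : ℝ => (s • kh : A.ker)) =O[𝓝 0] (fun s : ℝ => s) := by
      apply Asymptotics.isBigO_of_le' (c := ‖kh‖)
      intro s
      simp [norm_smul, mul_comm]
    have h4 := h2.trans_isBigO h3
    refine h4.congr (fun s => ?_) (fun _ => rfl)
    simp [Function.comp, h0, hkh]
  have hev3 : ∀ᶠ s : ℝ in 𝓝 0, ‖g (s • kh) - a - s • h‖ ≤ ε * ‖s‖ := hlo.def hε
  have hall : ∀ᶠ s : ℝ in 𝓝[>] (0:ℝ),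
      (f (g (s • kh)) = 0 ∧ g (s • kh) ∈ U ∧ ‖g (s • kh) - a - s • h‖ ≤ ε * ‖s‖)
        ∧ s ∈ Ioc (0:ℝ) ε := by
    refine Filter.Eventually.and ?_ ?_
    · exact ((hev1.and (hev2.and hev3)).filter_mono nhdsWithin_le_nhds)
    · exact Ioc_mem_nhdsGT_of_mem ⟨le_refl 0, hε⟩
  obtain ⟨s, ⟨hfs, hsU, hsn⟩, hs0, hsε⟩ := hall.exists
  refine ⟨s, hs0, hsε, g (s • kh), hsU, hfs, ?_⟩
  rwa [Real.norm_eq_abs, abs_of_pos hs0] at hsn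

/-- Fréchet normals are `pinner`-orthogonal to the kernel of the derivative of a local
defining submersion. -/
lemma frechet_pinner_eq_zero {C U : Set (ℝ × E)} {f : ℝ × E → G} {z' : ℝ × E}
    (hU : IsOpen U) (hz'U : z' ∈ U) (hf : ContDiffOn ℝ 1 f U)
    (hsurj : ∀ y ∈ U, Function.Surjective (fderivWithin ℝ f U y))
    (hCU : C ∩ U = {y ∈ U | f y = 0}) (hz'C : z' ∈ C)
    {v : ℝ × E} (hv : v ∈ frechetNCP C z') {h : ℝ × E} (hh : fderiv ℝ f z' h = 0) :
    pinner v h = 0 := by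
  have hstrict : HasStrictFDerivAt f (fderiv ℝ f z') z' :=
    (hf.contDiffAt (hU.mem_nhds hz'U)).hasStrictFDerivAt one_ne_zero
  have hsurj' : LinearMap.range (fderiv ℝ f z' : (ℝ × E) →ₗ[ℝ] G) = ⊤ := by
    rw [LinearMap.range_eq_top]
    have := hsurj z' hz'U
    rwa [fderivWithin_of_isOpen hU hz'U] at this
  have hfz : f z' = 0 := by
    have h1 : z' ∈ C ∩ U := ⟨hz'C, hz'U⟩
    rw [hCU] at h1
    exact h1.2
  have key : ∀ h' : ℝ × E, fderiv ℝ f z' h' = 0 → pinner v h' ≤ 0 := by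
    intro h' hh'
    refine pinner_le_zero_of_dir hv h' ?_
    intro ε hε
    obtain ⟨s, hs1, hs2, y, hyU, hyf, hyn⟩ :=
      exists_dir_points hstrict hsurj' hfz hh' (hU.mem_nhds hz'U) ε hε
    have hyC : y ∈ C := by
      have : y ∈ C ∩ U := by rw [hCU]; exact ⟨hyU, hyf⟩
      exact this.1
    exact ⟨s, hs1, hs2, y, hyC, hyn⟩
  have h1 := key h hh
  have h2 := key (-h) (by rw [map_neg, hh, neg_zero])
  have h3 : pinner v (-h) = - pinner v h := by
    have := pinner_smul_right v h (-1)
    simpa using this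
  linarith

/-- A Fréchet normal at an interior point vanishes. -/
lemma frechet_eq_zero_of_interior {C : Set (ℝ × E)} {z' v : ℝ × E}
    (hz' : z' ∈ interior C) (hv : v ∈ frechetNCP C z') : v = 0 := by
  have key : pinner v v ≤ 0 := by
    refine pinner_le_zero_of_dir hv v ?_
    intro ε hε
    obtain ⟨ρ, hρ, hball⟩ := Metric.isOpen_iff.1 isOpen_interior z' hz'
    set s := min ε (ρ / (2 * (‖v‖ + 1))) with hs
    have hs0 : 0 < s := lt_min hε (by positivity)
    refine ⟨s, hs0, min_le_left _ _, z' + s • v, ?_, ?_⟩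
    · have hmem : z' + s • v ∈ ball z' ρ := by
        rw [mem_ball, dist_eq_norm]
        have h1 : ‖z' + s • v - z'‖ = s * ‖v‖ := by
          rw [add_sub_cancel_left, norm_smul, Real.norm_eq_abs, abs_of_pos hs0]
        rw [h1]
        have h2 : s ≤ ρ / (2 * (‖v‖ + 1)) := min_le_right _ _
        have h3 : s * ‖v‖ ≤ ρ / (2 * (‖v‖ + 1)) * ‖v‖ :=
          mul_le_mul_of_nonneg_right h2 (norm_nonneg v)
        have h4 : ρ / (2 * (‖v‖ + 1)) * ‖v‖ < ρ := by
          rw [div_mul_eq_mul_div, div_lt_iff₀ (by positivity)]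
          nlinarith [norm_nonneg v]
        linarith
      exact interior_subset (hball hmem)
    · have : z' + s • v - z' - s • v = 0 := by abel
      rw [this, norm_zero]
      positivity
  by_contra h0
  exact absurd key (not_le.2 (pinner_self_pos h0))

/-- `pinner`-Riesz representation of a continuous linear functional on `ℝ × E`. -/
noncomputable def pdual (L : (ℝ × E) →L[ℝ] ℝ) : ℝ × E :=
  (L ((1:ℝ), (0:E)),
    (InnerProductSpace.toDual ℝ E).symm (L.comp (ContinuousLinearMap.inr ℝ ℝ E)))

lemma pinner_pdual (L : (ℝ × E) →L[ℝ] ℝ) (q : ℝ × E) : pinner (pdual L) q = L q := by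
  have hc : CompleteSpace E := FiniteDimensional.complete ℝ E
  have h2 : ⟪((InnerProductSpace.toDual ℝ E).symm
      (L.comp (ContinuousLinearMap.inr ℝ ℝ E)) : E), q.2⟫ = L ((0:ℝ), q.2) := by
    have := InnerProductSpace.toDual_symm_apply (𝕜 := ℝ) (E := E)
      (y := L.comp (ContinuousLinearMap.inr ℝ ℝ E)) (x := q.2)
    simpa using this
  have h3 : q = q.1 • ((1:ℝ), (0:E)) + ((0:ℝ), q.2) := by
    apply Prod.ext <;> simp
  calc pinner (pdual L) q = q.1 * L ((1:ℝ), (0:E)) + L ((0:ℝ), q.2) := by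
        simp only [pinner, pdual]
        rw [h2]
        ring
    _ = L (q.1 • ((1:ℝ), (0:E)) + ((0:ℝ), q.2)) := by
        rw [map_add, ContinuousLinearMap.map_smul, smul_eq_mul]
    _ = L q := by rw [← h3]

/-- Decomposition of a vector `pinner`-orthogonal to a hyperplane kernel. -/
lemma decomp_codim_one {L : (ℝ × E) →L[ℝ] ℝ} {v w : ℝ × E}
    (hw : ∀ q, pinner w q = L q) (hwne : w ≠ 0)
    (hperp : ∀ q, L q = 0 → pinner v q = 0) :
    v = (pinner v w / pinner w w) • w := by
  set c := pinner v w / pinner w w with hc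
  have hww : 0 < pinner w w := pinner_self_pos hwne
  have hr : L (v - c • w) = 0 := by
    rw [← hw, pinner_sub_right, pinner_smul_right, pinner_comm w v, hc,
      div_mul_cancel₀ _ (ne_of_gt hww), sub_self]
  have h1 : pinner v (v - c • w) = 0 := hperp _ hr
  have h2 : pinner (v - c • w) (v - c • w) = 0 := by
    have h3 : pinner (v - c • w) w = 0 := by
      rw [pinner_comm, hw]
      exact hr
    have h4 : pinner (v - c • w) (v - c • w)
        = pinner (v - c • w) v - c * pinner (v - c • w) w := by
      rw [pinner_sub_right, pinner_smul_right]
    rw [h4, h3, mul_zero, sub_zero, pinner_comm, h1]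
  have h5 : v - c • w = 0 := by
    by_contra hne
    exact absurd h2 (ne_of_gt (pinner_self_pos hne))
  have := sub_eq_zero.mp h5
  exact this

/-- A map close to the identity on a finite-dimensional space is surjective with
controlled preimages. -/
lemma surj_of_near_id (T : G →L[ℝ] G) (hT : ∀ ξ, ‖T ξ - ξ‖ ≤ ‖ξ‖ / 2) (ξ : G) :
    ∃ η, T η = ξ ∧ ‖η‖ ≤ 2 * ‖ξ‖ := by
  have hinj : Function.Injective T := by
    intro a b hab
    have h1 : T (a - b) = 0 := by rw [map_sub, hab, sub_self]
    have h2 := hT (a - b)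
    rw [h1, zero_sub, norm_neg] at h2
    have h3 : ‖a - b‖ = 0 := by linarith [norm_nonneg (a - b)]
    have := norm_eq_zero.mp h3
    exact sub_eq_zero.mp this
  have hsurjT : Function.Surjective T := by
    have := LinearMap.injective_iff_surjective (f := (T : G →ₗ[ℝ] G))
    exact this.mp hinj
  obtain ⟨η, hη⟩ := hsurjT ξ
  refine ⟨η, hη, ?_⟩
  have h1 := hT η
  rw [hη] at h1
  have h2 : ‖η‖ ≤ ‖ξ - η‖ + ‖ξ‖ := by
    have : η = -(ξ - η) + ξ := by abel
    calc ‖η‖ = ‖-(ξ - η) + ξ‖ := by rw [← this]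
      _ ≤ ‖-(ξ - η)‖ + ‖ξ‖ := norm_add_le _ _
      _ = ‖ξ - η‖ + ‖ξ‖ := by rw [norm_neg]
  have h3 : ‖ξ - η‖ = ‖T η - η‖ := by rw [hη]
  linarith

/-- Derivative along a line. -/
lemma hasDerivAt_line {f : ℝ × E → G} {A : (ℝ × E) →L[ℝ] G} {p : ℝ × E}
    (hf : HasFDerivAt f A p) (h : ℝ × E) :
    HasDerivAt (fun s : ℝ => f (p + s • h)) (A h) 0 := by
  have hg : HasDerivAt (fun s : ℝ => p + s • h) h 0 := by
    have h1 : HasDerivAt (fun s : ℝ => s • h) ((1:ℝ) • h) 0 := (hasDerivAt_id (0:ℝ)).smul_const h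
    simpa using h1.const_add p
  have hf' : HasFDerivAt f A ((fun s : ℝ => p + s • h) 0) := by simpa using hf
  exact hf'.comp_hasDerivAt 0 hg

lemma eventually_pos_of_hasDerivAt {ζ : ℝ → ℝ} {β : ℝ} (hζ : HasDerivAt ζ β 0)
    (h0 : ζ 0 = 0) (hβ : 0 < β) :
    ∀ᶠ s in 𝓝[>] (0:ℝ), 0 < ζ s := by
  have hslope := hasDerivAt_iff_tendsto_slope.mp hζ
  have h1 : ∀ᶠ s in 𝓝[≠] (0:ℝ), 0 < slope ζ 0 s :=
    hslope.eventually (eventually_gt_nhds hβ)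
  have h2 : 𝓝[>] (0:ℝ) ≤ 𝓝[≠] 0 :=
    nhdsWithin_mono 0 (fun x hx => ne_of_gt hx)
  filter_upwards [h1.filter_mono h2, self_mem_nhdsWithin] with s hs hs0
  have hsl : slope ζ 0 s = ζ s / s := by
    rw [slope_def_field, h0, sub_zero, sub_zero]
  rw [hsl] at hs
  have hs0' : (0:ℝ) < s := hs0
  have := mul_pos hs hs0'
  rwa [div_mul_cancel₀ _ (ne_of_gt hs0')] at this


lemma frechetNCP_mono {C' C : Set (ℝ × E)} (h : C' ⊆ C) {z v : ℝ × E}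
    (hv : v ∈ frechetNCP C z) : v ∈ frechetNCP C' z := by
  intro ε hε
  obtain ⟨d, hd, hfre⟩ := hv ε hε
  exact ⟨d, hd, fun y hy => hfre y (h hy)⟩

lemma frontier_subset_self {C : Set (ℝ × E)} (hC : IsClosed C) : frontier C ⊆ C := by
  intro p hp
  rw [hC.frontier_eq] at hp
  exact hp.1

/-- Key sign estimate in the boundary case when the time-derivative of the defining
function is positive. -/
lemma case2pos {S : ℝ → Set E} (hclosed : IsClosed (sgraph S))
    {tb : ℝ} {xb : E} (hz : ((tb, xb) : ℝ × E) ∈ sgraph S)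
    (hzfr : ((tb, xb) : ℝ × E) ∈ frontier (sgraph S))
    {δ : ℝ} (hδ : 0 < δ) (hstat : ∀ t ∈ Ioo tb (tb + δ), xb ∈ S t)
    {U : Set (ℝ × E)} (hUopen : IsOpen U) (hzU : ((tb, xb) : ℝ × E) ∈ U)
    {g : ℝ × E → ℝ} (hgC1 : ContDiffOn ℝ 1 g U)
    (hgsurj : ∀ y ∈ U, Function.Surjective (fderivWithin ℝ g U y))
    (hMU : frontier (sgraph S) ∩ U = {y ∈ U | g y = 0})
    (hβ : 0 < fderiv ℝ g (tb, xb) ((1:ℝ), (0:E)))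
    {zs vs : ℕ → ℝ × E} (hzsC : ∀ i, zs i ∈ sgraph S)
    (hvsF : ∀ i, vs i ∈ frechetNCP (sgraph S) (zs i))
    (hzst : Tendsto zs atTop (𝓝 (tb, xb))) :
    ∀ᶠ i in atTop, (vs i).1 ≤ 0 := by
  have hstrict : HasStrictFDerivAt g (fderiv ℝ g (tb, xb)) (tb, xb) :=
    (hgC1.contDiffAt (hUopen.mem_nhds hzU)).hasStrictFDerivAt one_ne_zero
  set L := fderiv ℝ g (tb, xb) with hL
  have hgz0 : g (tb, xb) = 0 := by
    have h1 : ((tb, xb) : ℝ × E) ∈ frontier (sgraph S) ∩ U := ⟨hzfr, hzU⟩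
    rw [hMU] at h1
    exact h1.2
  have hsurjz : LinearMap.range (L : (ℝ × E) →ₗ[ℝ] ℝ) = ⊤ := by
    rw [LinearMap.range_eq_top]
    have := hgsurj _ hzU
    rwa [fderivWithin_of_isOpen hUopen hzU] at this
  set φ := hstrict.implicitToOpenPartialHomeomorph g L hsurjz with hφ
  have hzsrc : ((tb, xb) : ℝ × E) ∈ φ.source :=
    hstrict.mem_implicitToOpenPartialHomeomorph_source hsurjz
  have hfst : ∀ y, (φ y).1 = g y := fun y => rfl
  have hφz : φ (tb, xb) = (0, 0) := by
    have h1 := hstrict.implicitToOpenPartialHomeomorph_self hsurjz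
    rw [hgz0] at h1
    exact h1
  set V := φ.source ∩ U with hV
  have hVopen : IsOpen V := φ.open_source.inter hUopen
  have hzV : ((tb, xb) : ℝ × E) ∈ V := ⟨hzsrc, hzU⟩
  have hWopen : IsOpen (φ '' V) := φ.isOpen_image_of_subset_source hVopen inter_subset_left
  have hzW : ((0:ℝ), (0 : L.ker)) ∈ φ '' V := ⟨(tb, xb), hzV, hφz⟩
  obtain ⟨r, hr0, hrball⟩ := Metric.isOpen_iff.mp hWopen _ hzW
  set Q : Set (ℝ × L.ker) :=
    {q ∈ ball ((0:ℝ), (0 : L.ker)) r | 0 < q.1} with hQ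
  set P := φ.symm '' Q with hP
  have hQW : Q ⊆ φ '' V := fun q hq => hrball hq.1
  have hQtgt : Q ⊆ φ.target := by
    intro q hq
    obtain ⟨y, hyV, rfl⟩ := hQW hq
    exact φ.map_source hyV.1
  have hPV : P ⊆ V := by
    rintro p ⟨q, hq, rfl⟩
    obtain ⟨y, hyV, rfl⟩ := hQW hq
    rw [φ.left_inv hyV.1]
    exact hyV
  have hgP : ∀ p ∈ P, 0 < g p := by
    rintro p ⟨q, hq, rfl⟩
    have h1 : g (φ.symm q) = (φ (φ.symm q)).1 := (hfst _).symm
    rw [h1, φ.right_inv (hQtgt hq)]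
    exact hq.2
  have hPconn : IsPreconnected P := by
    have hhalf : Convex ℝ {q : ℝ × L.ker | 0 < q.1} :=
      convex_halfSpace_gt (⟨fun _ _ => rfl, fun _ _ => rfl⟩ :
        IsLinearMap ℝ (fun q : ℝ × L.ker => q.1)) 0
    have hQconv : Convex ℝ Q := (convex_ball _ _).inter hhalf
    exact hQconv.isPreconnected.image _ (φ.continuousOn_symm.mono hQtgt)
  -- membership criterion for P
  have hmemP : ∀ p : ℝ × E, p ∈ V → φ p ∈ ball ((0:ℝ), (0 : L.ker)) r →
      0 < g p → p ∈ P := by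
    intro p hpV hpball hpg
    refine ⟨φ p, ⟨hpball, ?_⟩, φ.left_inv hpV.1⟩
    rw [hfst]
    exact hpg
  -- a point of the ray belongs to P ∩ sgraph S
  have hray : ∃ p, p ∈ P ∩ sgraph S := by
    have hline : Tendsto (fun s : ℝ => ((tb, xb) : ℝ × E) + s • ((1:ℝ), (0:E))) (𝓝 0)
        (𝓝 (tb, xb)) := by
      have hcont : Continuous (fun s : ℝ => ((tb, xb) : ℝ × E) + s • ((1:ℝ), (0:E))) :=
        continuous_const.add (continuous_id.smul continuous_const)
      simpa using hcont.tendsto 0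
    have hζ := hasDerivAt_line hstrict.hasFDerivAt ((1:ℝ), (0:E))
    have hpos : ∀ᶠ s in 𝓝[>] (0:ℝ), 0 < g (((tb, xb) : ℝ × E) + s • ((1:ℝ), (0:E))) :=
      eventually_pos_of_hasDerivAt hζ (by simpa using hgz0) hβ
    have hev1 : ∀ᶠ s in 𝓝[>] (0:ℝ), ((tb, xb) : ℝ × E) + s • ((1:ℝ), (0:E)) ∈ V :=
      (hline.eventually_mem (hVopen.mem_nhds hzV)).filter_mono nhdsWithin_le_nhds
    have hev2 : ∀ᶠ s in 𝓝[>] (0:ℝ),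
        φ (((tb, xb) : ℝ × E) + s • ((1:ℝ), (0:E))) ∈ ball ((0:ℝ), (0 : L.ker)) r := by
      have hφc : ContinuousAt φ (tb, xb) := φ.continuousAt hzsrc
      have h1 := (hφc.tendsto.comp hline)
      rw [hφz] at h1
      exact (h1.eventually_mem (ball_mem_nhds _ hr0)).filter_mono nhdsWithin_le_nhds
    have hev3 : ∀ᶠ s in 𝓝[>] (0:ℝ), ((tb, xb) : ℝ × E) + s • ((1:ℝ), (0:E)) ∈ sgraph S := by
      filter_upwards [Ioo_mem_nhdsGT_of_mem
        (⟨le_refl (0:ℝ), hδ⟩ : (0:ℝ) ∈ Ico (0:ℝ) δ)] with s hs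
      have heq : ((tb, xb) : ℝ × E) + s • ((1:ℝ), (0:E)) = (tb + s, xb) := by
        apply Prod.ext <;> simp
      rw [heq]
      exact hstat (tb + s) ⟨by linarith [hs.1], by linarith [hs.2]⟩
    obtain ⟨s, hsg, hsV, hsb, hsS⟩ := (hpos.and (hev1.and (hev2.and hev3))).exists
    exact ⟨_, hmemP _ hsV hsb hsg, hsS⟩
  -- P is contained in the graph
  have hPS : P ⊆ sgraph S := by
    obtain ⟨p₀, hp₀P, hp₀S⟩ := hray
    have hnotfr : ∀ p ∈ P, p ∉ frontier (sgraph S) := by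
      intro p hp hpfr
      have h1 : p ∈ frontier (sgraph S) ∩ U := ⟨hpfr, (hPV hp).2⟩
      rw [hMU] at h1
      exact absurd h1.2 (ne_of_gt (hgP p hp))
    by_contra hnc
    rw [not_subset] at hnc
    obtain ⟨p₁, hp₁P, hp₁S⟩ := hnc
    have hsub : P ⊆ interior (sgraph S) ∪ (sgraph S)ᶜ := by
      intro p hp
      by_cases hpS : p ∈ sgraph S
      · left
        by_contra hpint
        exact hnotfr p hp (by rw [hclosed.frontier_eq]; exact ⟨hpS, hpint⟩)
      · right; exact hpS
    have h1 : (P ∩ interior (sgraph S)).Nonempty := by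
      refine ⟨p₀, hp₀P, ?_⟩
      by_contra hpint
      exact hnotfr p₀ hp₀P (by rw [hclosed.frontier_eq]; exact ⟨hp₀S, hpint⟩)
    have h2 : (P ∩ (sgraph S)ᶜ).Nonempty := ⟨p₁, hp₁P, hp₁S⟩
    obtain ⟨q, hqP, hq1, hq2⟩ :=
      hPconn _ _ isOpen_interior hclosed.isOpen_compl hsub h1 h2
    exact hq2 (interior_subset hq1)
  -- eventual estimates
  have hfder : ContinuousOn (fderiv ℝ g) U := hgC1.continuousOn_fderiv_of_isOpen hUopen le_rfl
  have hLt : Tendsto (fun i => fderiv ℝ g (zs i)) atTop (𝓝 L) :=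
    ((hfder.continuousAt (hUopen.mem_nhds hzU)).tendsto).comp hzst
  have hβt : Tendsto (fun i => fderiv ℝ g (zs i) ((1:ℝ), (0:E))) atTop
      (𝓝 (L ((1:ℝ), (0:E)))) :=
    ((ContinuousLinearMap.apply ℝ ℝ ((1:ℝ), (0:E))).continuous.tendsto L).comp hLt
  have hevβ : ∀ᶠ i in atTop, 0 < fderiv ℝ g (zs i) ((1:ℝ), (0:E)) :=
    hβt.eventually (eventually_gt_nhds hβ)
  have hevV : ∀ᶠ i in atTop, zs i ∈ V := hzst.eventually_mem (hVopen.mem_nhds hzV)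
  have hevball : ∀ᶠ i in atTop, φ (zs i) ∈ ball ((0:ℝ), (0 : L.ker)) (r / 2) := by
    have hφc : ContinuousAt φ (tb, xb) := φ.continuousAt hzsrc
    have h1 := hφc.tendsto.comp hzst
    rw [hφz] at h1
    exact h1.eventually_mem (ball_mem_nhds _ (by positivity))
  filter_upwards [hevβ, hevV, hevball] with i hiβ hiV hiball
  by_cases hint : zs i ∈ interior (sgraph S)
  · rw [frechet_eq_zero_of_interior hint (hvsF i)]
    simp
  · have hifr : zs i ∈ frontier (sgraph S) := by
      rw [hclosed.frontier_eq]
      exact ⟨hzsC i, hint⟩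
    set Li := fderiv ℝ g (zs i) with hLi
    set wi := pdual Li with hwi
    have hiU : zs i ∈ U := hiV.2
    have hLisurj : Function.Surjective Li := by
      have := hgsurj _ hiU
      rwa [fderivWithin_of_isOpen hUopen hiU] at this
    have hwne : wi ≠ 0 := by
      intro h0
      obtain ⟨q, hq⟩ := hLisurj 1
      have h1 := pinner_pdual Li q
      rw [← hwi, h0, hq] at h1
      simp [pinner] at h1
    have hperp : ∀ q : ℝ × E, Li q = 0 → pinner (vs i) q = 0 := by
      intro q hq
      exact frechet_pinner_eq_zero hUopen hiU hgC1 hgsurj hMU hifr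
        (frechetNCP_mono (frontier_subset_self hclosed) (hvsF i)) hq
    have hdecomp := decomp_codim_one (pinner_pdual Li) hwne hperp
    -- sign of pinner (vs i) wi
    have hgzi : g (zs i) = 0 := by
      have h1 : zs i ∈ frontier (sgraph S) ∩ U := ⟨hifr, hiU⟩
      rw [hMU] at h1
      exact h1.2
    have hstricti : HasStrictFDerivAt g Li (zs i) :=
      (hgC1.contDiffAt (hUopen.mem_nhds hiU)).hasStrictFDerivAt one_ne_zero
    have hsign : pinner (vs i) wi ≤ 0 := by
      apply pinner_le_zero_of_dir (hvsF i) wi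
      intro ε hε
      have hζi := hasDerivAt_line hstricti.hasFDerivAt wi
      have hLiwi : 0 < Li wi := by
        rw [← pinner_pdual Li wi, ← hwi]
        exact pinner_self_pos hwne
      have hpos : ∀ᶠ s in 𝓝[>] (0:ℝ), 0 < g (zs i + s • wi) :=
        eventually_pos_of_hasDerivAt hζi (by simpa using hgzi) hLiwi
      have hlinei : Tendsto (fun s : ℝ => zs i + s • wi) (𝓝 0) (𝓝 (zs i)) := by
        have hcont : Continuous (fun s : ℝ => zs i + s • wi) :=
          continuous_const.add (continuous_id.smul continuous_const)
        simpa using hcont.tendsto 0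
      have hev1 : ∀ᶠ s in 𝓝[>] (0:ℝ), zs i + s • wi ∈ V :=
        (hlinei.eventually_mem (hVopen.mem_nhds hiV)).filter_mono nhdsWithin_le_nhds
      have hev2 : ∀ᶠ s in 𝓝[>] (0:ℝ),
          φ (zs i + s • wi) ∈ ball ((0:ℝ), (0 : L.ker)) r := by
        have hφc : ContinuousAt φ (zs i) := φ.continuousAt hiV.1
        have h1 := hφc.tendsto.comp hlinei
        have hb : ball ((0:ℝ), (0 : L.ker)) r ∈ 𝓝 (φ (zs i)) :=
          isOpen_ball.mem_nhds (ball_subset_ball (by linarith) hiball)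
        exact (h1.eventually_mem hb).filter_mono nhdsWithin_le_nhds
      have hev3 : ∀ᶠ s in 𝓝[>] (0:ℝ), s ∈ Ioc (0:ℝ) ε :=
        Ioc_mem_nhdsGT_of_mem ⟨le_refl 0, hε⟩
      obtain ⟨s, hsg, hsV, hsb, hs0, hsε⟩ := (hpos.and (hev1.and (hev2.and hev3))).exists
      refine ⟨s, hs0, hsε, zs i + s • wi, hPS (hmemP _ hsV hsb hsg), ?_⟩
      have : zs i + s • wi - zs i - s • wi = 0 := by abel
      rw [this, norm_zero]
      positivity
    -- conclude
    have h1 : (vs i).1 = (pinner (vs i) wi / pinner wi wi) * wi.1 := by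
      have := congrArg Prod.fst hdecomp
      simpa [smul_eq_mul] using this
    have hwi1 : wi.1 = Li ((1:ℝ), (0:E)) := rfl
    rw [h1, hwi1]
    apply mul_nonpos_of_nonpos_of_nonneg
    · exact div_nonpos_of_nonpos_of_nonneg hsign (pinner_self_pos hwne).le
    · exact le_of_lt hiβ

/-- The boundary case when the time-derivative of the defining function vanishes. -/
lemma case2zero {S : ℝ → Set E} (hclosed : IsClosed (sgraph S))
    {tb : ℝ} {xb : E}
    {U : Set (ℝ × E)} (hUopen : IsOpen U) (hzU : ((tb, xb) : ℝ × E) ∈ U)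
    {g : ℝ × E → ℝ} (hgC1 : ContDiffOn ℝ 1 g U)
    (hgsurj : ∀ y ∈ U, Function.Surjective (fderivWithin ℝ g U y))
    (hMU : frontier (sgraph S) ∩ U = {y ∈ U | g y = 0})
    (hβ0 : fderiv ℝ g (tb, xb) ((1:ℝ), (0:E)) = 0)
    {zs vs : ℕ → ℝ × E} (hzsC : ∀ i, zs i ∈ sgraph S)
    (hvsF : ∀ i, vs i ∈ frechetNCP (sgraph S) (zs i))
    (hzst : Tendsto zs atTop (𝓝 (tb, xb)))
    {α : ℝ} {u : E}
    (hαlim : Tendsto (fun i => (vs i).1) atTop (𝓝 α))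
    (hvnorm : Tendsto (fun i => |(vs i).1| + ‖(vs i).2‖) atTop (𝓝 (|α| + ‖u‖))) :
    α ≤ 0 := by
  set L := fderiv ℝ g (tb, xb) with hL
  have hsurjz : Function.Surjective L := by
    have := hgsurj _ hzU
    rwa [fderivWithin_of_isOpen hUopen hzU] at this
  set βf : ℕ → ℝ := fun i => fderiv ℝ g (zs i) ((1:ℝ), (0:E)) with hβf
  set nf : ℕ → ℝ := fun i =>
    ‖(fderiv ℝ g (zs i)).comp (ContinuousLinearMap.inr ℝ ℝ E)‖ with hnf
  set df : ℕ → ℝ := fun i => βf i ^ 2 + nf i ^ 2 with hdf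
  set b : ℕ → ℝ := fun i =>
    ((|(vs i).1| + ‖(vs i).2‖) * max |βf i| (nf i)) * |βf i| / df i with hb
  set w := pdual L with hw
  have hwne : w ≠ 0 := by
    intro h0
    obtain ⟨q, hq⟩ := hsurjz 1
    have h1 := pinner_pdual L q
    rw [← hw, h0, hq] at h1
    simp [pinner] at h1
  have hn : ‖w.2‖ = ‖L.comp (ContinuousLinearMap.inr ℝ ℝ E)‖ := by
    simp only [hw, pdual]
    exact LinearIsometryEquiv.norm_map _ _
  have hD : 0 < L ((1:ℝ), (0:E)) ^ 2 + ‖L.comp (ContinuousLinearMap.inr ℝ ℝ E)‖ ^ 2 := by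
    have h1 := pinner_self_pos hwne
    rw [pinner_self, hn] at h1
    exact h1
  -- limits
  have hfder : ContinuousOn (fderiv ℝ g) U := hgC1.continuousOn_fderiv_of_isOpen hUopen le_rfl
  have hLt : Tendsto (fun i => fderiv ℝ g (zs i)) atTop (𝓝 L) :=
    ((hfder.continuousAt (hUopen.mem_nhds hzU)).tendsto).comp hzst
  have hβt : Tendsto βf atTop (𝓝 (L ((1:ℝ), (0:E)))) :=
    ((ContinuousLinearMap.apply ℝ ℝ ((1:ℝ), (0:E))).continuous.tendsto L).comp hLt
  have hnt : Tendsto nf atTop (𝓝 ‖L.comp (ContinuousLinearMap.inr ℝ ℝ E)‖) := by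
    have hcomp : Continuous (fun L' : (ℝ × E) →L[ℝ] ℝ =>
        L'.comp (ContinuousLinearMap.inr ℝ ℝ E)) := by
      have := ((ContinuousLinearMap.compL ℝ E (ℝ × E) ℝ).flip
        (ContinuousLinearMap.inr ℝ ℝ E)).continuous
      exact this
    exact (continuous_norm.tendsto _).comp ((hcomp.tendsto L).comp hLt)
  have hdft : Tendsto df atTop
      (𝓝 (L ((1:ℝ), (0:E)) ^ 2 + ‖L.comp (ContinuousLinearMap.inr ℝ ℝ E)‖ ^ 2)) :=
    ((hβt.pow 2).add (hnt.pow 2))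
  have hbt : Tendsto b atTop (𝓝 0) := by
    have h1 : Tendsto (fun i => (|(vs i).1| + ‖(vs i).2‖) * max |βf i| (nf i)) atTop
        (𝓝 ((|α| + ‖u‖) * max |L ((1:ℝ), (0:E))|
          ‖L.comp (ContinuousLinearMap.inr ℝ ℝ E)‖)) :=
      hvnorm.mul (hβt.abs.max hnt)
    have h2 := (h1.mul hβt.abs).div hdft (ne_of_gt hD)
    rw [hβ0] at h2
    simp only [abs_zero, mul_zero, zero_div] at h2; exact h2
  have hdfpos : ∀ᶠ i in atTop, 0 < df i := hdft.eventually (eventually_gt_nhds hD)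
  have hevU : ∀ᶠ i in atTop, zs i ∈ U := hzst.eventually_mem (hUopen.mem_nhds hzU)
  have hbound : ∀ᶠ i in atTop, |(vs i).1| ≤ b i := by
    filter_upwards [hdfpos, hevU] with i hidf hiU
    have hbnn : 0 ≤ b i := by
      rw [hb]
      apply div_nonneg _ hidf.le
      apply mul_nonneg _ (abs_nonneg _)
      apply mul_nonneg (by positivity) (le_trans (abs_nonneg _) (le_max_left _ _))
    by_cases hint : zs i ∈ interior (sgraph S)
    · rw [frechet_eq_zero_of_interior hint (hvsF i)]
      simpa using hbnn
    · have hifr : zs i ∈ frontier (sgraph S) := by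
        rw [hclosed.frontier_eq]
        exact ⟨hzsC i, hint⟩
      set Li := fderiv ℝ g (zs i) with hLi
      set wi := pdual Li with hwi
      have hLisurj : Function.Surjective Li := by
        have := hgsurj _ hiU
        rwa [fderivWithin_of_isOpen hUopen hiU] at this
      have hwine : wi ≠ 0 := by
        intro h0
        obtain ⟨q, hq⟩ := hLisurj 1
        have h1 := pinner_pdual Li q
        rw [← hwi, h0, hq] at h1
        simp [pinner] at h1
      have hperp : ∀ q : ℝ × E, Li q = 0 → pinner (vs i) q = 0 := by
        intro q hq
        exact frechet_pinner_eq_zero hUopen hiU hgC1 hgsurj hMU hifr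
          (frechetNCP_mono (frontier_subset_self hclosed) (hvsF i)) hq
      have hdecomp := decomp_codim_one (pinner_pdual Li) hwine hperp
      have h1 : (vs i).1 = (pinner (vs i) wi / pinner wi wi) * wi.1 := by
        have := congrArg Prod.fst hdecomp
        simpa [smul_eq_mul] using this
      have hwi1 : wi.1 = βf i := rfl
      have hwin2 : ‖wi.2‖ = nf i := by
        simp only [hwi, pdual]
        exact LinearIsometryEquiv.norm_map _ _
      have hpww : pinner wi wi = df i := by
        rw [pinner_self, hwi1, hwin2]
      have hnorm_wi : ‖wi‖ = max |βf i| (nf i) := by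
        rw [Prod.norm_def, hwi1, hwin2]
        rw [Real.norm_eq_abs]
      have h2 : |pinner (vs i) wi| ≤ (|(vs i).1| + ‖(vs i).2‖) * max |βf i| (nf i) := by
        rw [← hnorm_wi]
        exact abs_pinner_le _ _
      have h3 : |(vs i).1| = |pinner (vs i) wi| / df i * |βf i| := by
        rw [h1, hwi1, hpww, abs_mul, abs_div, abs_of_pos hidf]
      rw [h3]
      simp only [hb]
      have h4 := mul_le_mul_of_nonneg_right h2 (abs_nonneg (βf i))
      calc |pinner (vs i) wi| / df i * |βf i|
          = |pinner (vs i) wi| * |βf i| / df i := by ring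
        _ ≤ (|(vs i).1| + ‖(vs i).2‖) * max |βf i| (nf i) * |βf i| / df i :=
            (div_le_div_iff_of_pos_right hidf).mpr h4
  have habs : Tendsto (fun i => |(vs i).1|) atTop (𝓝 |α|) := hαlim.abs
  have h0 : |α| ≤ 0 := le_of_tendsto_of_tendsto habs hbt hbound
  have hα0 : α = 0 := abs_nonpos_iff.mp h0
  exact hα0.le

end IFT

set_option maxHeartbeats 2000000 in
/-- Proposition, geometric facts (a): if `x̄ ∈ S(t)` for all
`t ∈ (t̄, t̄+δ)`, then every `(α,u) ∈ N_𝒮(t̄,x̄)` has `α ≤ 0`. -/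
theorem statement13 {E : Type*} [NormedAddCommGroup E] [InnerProductSpace ℝ E]
    [FiniteDimensional ℝ E] (S : ℝ → Set E) (hS : SmoothSweepingProcess S)
    (tb : ℝ) (htb : tb ∈ sdom S) (hsup : ∃ t ∈ sdom S, tb < t)
    (xb : E) (hxb : xb ∈ S tb)
    (δ : ℝ) (hδ : 0 < δ) (hstat : ∀ t ∈ Ioo tb (tb + δ), xb ∈ S t) :
    ∀ α : ℝ, ∀ u : E, (α, u) ∈ limitingNCP (sgraph S) (tb, xb) → α ≤ 0 := by
  intro α u hmem
  obtain ⟨zs, vs, hzsC, hvsF, hzst, hvst⟩ := hmem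
  obtain ⟨hclosed, -, hcase⟩ := hS
  have hz : ((tb, xb) : ℝ × E) ∈ sgraph S := hxb
  have hαlim : Tendsto (fun i => (vs i).1) atTop (𝓝 α) :=
    (continuous_fst.tendsto _).comp hvst
  have hvnorm : Tendsto (fun i => |(vs i).1| + ‖(vs i).2‖) atTop (𝓝 (|α| + ‖u‖)) := by
    have hcont : Continuous fun p : ℝ × E => |p.1| + ‖p.2‖ :=
      (continuous_abs.comp continuous_fst).add (continuous_norm.comp continuous_snd)
    exact (hcont.tendsto _).comp hvst
  rcases hcase with ⟨c, hc1, hman⟩ | ⟨hclint, hman⟩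
  · -- codimension ≥ 1 case
    obtain ⟨U, hUopen, hzU, f, hfC1, hfsurj, hMU⟩ := hman (tb, xb) hz
    set A := fderiv ℝ f (tb, xb) with hA
    have hdiffat : HasStrictFDerivAt f A (tb, xb) :=
      (hfC1.contDiffAt (hUopen.mem_nhds hzU)).hasStrictFDerivAt one_ne_zero
    have hA10 : A ((1:ℝ), (0:E)) = 0 := by
      have hline := hasDerivAt_line hdiffat.hasFDerivAt ((1:ℝ), (0:E))
      have hUev : ∀ᶠ s : ℝ in 𝓝 0, ((tb, xb) : ℝ × E) + s • ((1:ℝ), (0:E)) ∈ U := by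
        have hlin : Tendsto (fun s : ℝ => ((tb, xb) : ℝ × E) + s • ((1:ℝ), (0:E))) (𝓝 0)
            (𝓝 (tb, xb)) := by
          have hcont : Continuous (fun s : ℝ => ((tb, xb) : ℝ × E) + s • ((1:ℝ), (0:E))) :=
            continuous_const.add (continuous_id.smul continuous_const)
          have h0 := hcont.tendsto 0
          simpa using h0
        exact hlin.eventually_mem (hUopen.mem_nhds hzU)
      obtain ⟨η, hη0, hη⟩ := Metric.eventually_nhds_iff.mp hUev
      set η' := min η δ with hη'def
      have hη'0 : 0 < η' := lt_min hη0 hδ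
      have hzero : ∀ s : ℝ, 0 ≤ s → s < η' →
          f (((tb, xb) : ℝ × E) + s • ((1:ℝ), (0:E))) = 0 := by
        intro s hs0 hsη
        have hsη1 : s < η := lt_of_lt_of_le hsη (min_le_left _ _)
        have hsδ : s < δ := lt_of_lt_of_le hsη (min_le_right _ _)
        have hU' : ((tb, xb) : ℝ × E) + s • ((1:ℝ), (0:E)) ∈ U := by
          apply hη
          rw [Real.dist_eq, sub_zero, abs_of_nonneg hs0]
          exact hsη1
        have heq : ((tb, xb) : ℝ × E) + s • ((1:ℝ), (0:E)) = (tb + s, xb) := by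
          apply Prod.ext <;> simp
        have hSmem : ((tb, xb) : ℝ × E) + s • ((1:ℝ), (0:E)) ∈ sgraph S := by
          rw [heq]
          rcases eq_or_lt_of_le hs0 with hs | hs
          · rw [← hs, add_zero]; exact hz
          · exact hstat (tb + s) ⟨by linarith, by linarith⟩
        have hin : ((tb, xb) : ℝ × E) + s • ((1:ℝ), (0:E)) ∈ sgraph S ∩ U := ⟨hSmem, hU'⟩
        rw [hMU] at hin
        exact hin.2
      have hd1 : HasDerivWithinAt (fun s : ℝ => f (((tb, xb) : ℝ × E) + s • ((1:ℝ), (0:E))))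
          (A ((1:ℝ), (0:E))) (Ici 0) 0 := hline.hasDerivWithinAt
      have hd2 : HasDerivWithinAt (fun s : ℝ => f (((tb, xb) : ℝ × E) + s • ((1:ℝ), (0:E))))
          0 (Ici 0) 0 := by
        have hconst : HasDerivWithinAt (fun _ : ℝ => (0 : EuclideanSpace ℝ (Fin c)))
            0 (Ici 0) 0 := hasDerivWithinAt_const 0 _ 0
        apply hconst.congr_of_eventuallyEq
        · filter_upwards [Ico_mem_nhdsGE hη'0] with s hs
          exact hzero s hs.1 hs.2
        · exact hzero 0 le_rfl hη'0
      exact ((uniqueDiffOn_Ici (0:ℝ)) 0 Set.self_mem_Ici).eq_deriv _ hd1 hd2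
    have hsurjz : Function.Surjective A := by
      have := hfsurj _ hzU
      rwa [fderivWithin_of_isOpen hUopen hzU] at this
    obtain ⟨Rlin, hRlin⟩ := LinearMap.exists_rightInverse_of_surjective
      (f := (A : (ℝ × E) →ₗ[ℝ] EuclideanSpace ℝ (Fin c))) (LinearMap.range_eq_top.2 hsurjz)
    set R := LinearMap.toContinuousLinearMap Rlin with hRdef
    have hAR : ∀ ξ, A (R ξ) = ξ := by
      intro ξ
      have := LinearMap.ext_iff.1 hRlin ξ
      simpa [hRdef] using this
    have hfder : ContinuousOn (fderiv ℝ f) U := hfC1.continuousOn_fderiv_of_isOpen hUopen le_rfl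
    have hAt : Tendsto (fun i => fderiv ℝ f (zs i)) atTop (𝓝 A) :=
      ((hfder.continuousAt (hUopen.mem_nhds hzU)).tendsto).comp hzst
    have hevU : ∀ᶠ i in atTop, zs i ∈ U := hzst.eventually_mem (hUopen.mem_nhds hzU)
    have hsmall : ∀ᶠ i in atTop, ‖fderiv ℝ f (zs i) - A‖ ≤ 1 / (2 * (‖R‖ + 1)) := by
      have hball : ∀ᶠ B' in 𝓝 A, ‖B' - A‖ ≤ 1 / (2 * (‖R‖ + 1)) := by
        have h0 : (0:ℝ) < 1 / (2 * (‖R‖ + 1)) := by positivity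
        filter_upwards [Metric.ball_mem_nhds A h0] with B' hB'
        exact ((mem_ball_iff_norm (a := A) (b := B')).mp hB').le
      exact hAt.eventually hball
    have hbound : ∀ᶠ i in atTop, (vs i).1 ≤
        (|(vs i).1| + ‖(vs i).2‖) * (2 * ‖R‖ * ‖fderiv ℝ f (zs i) ((1:ℝ), (0:E))‖) := by
      filter_upwards [hevU, hsmall] with i hiU hismall
      set Ai := fderiv ℝ f (zs i) with hAi
      have hT : ∀ ξ, ‖Ai (R ξ) - ξ‖ ≤ ‖ξ‖ / 2 := by
        intro ξ
        have h1 : Ai (R ξ) - ξ = (Ai - A) (R ξ) := by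
          rw [ContinuousLinearMap.sub_apply, hAR]
        rw [h1]
        calc ‖(Ai - A) (R ξ)‖ ≤ ‖Ai - A‖ * ‖R ξ‖ := (Ai - A).le_opNorm _
          _ ≤ ‖Ai - A‖ * (‖R‖ * ‖ξ‖) :=
              mul_le_mul_of_nonneg_left (R.le_opNorm ξ) (norm_nonneg (Ai - A))
          _ ≤ (1 / (2 * (‖R‖ + 1))) * (‖R‖ * ‖ξ‖) :=
              mul_le_mul_of_nonneg_right hismall (by positivity)
          _ ≤ ‖ξ‖ / 2 := by
              rw [div_mul_eq_mul_div, one_mul, div_le_div_iff₀ (by positivity) (by positivity)]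
              nlinarith [norm_nonneg R, norm_nonneg ξ]
      obtain ⟨η, hTη, hηn⟩ := surj_of_near_id (Ai.comp R)
        (by intro ξ; simpa using hT ξ) (Ai ((1:ℝ), (0:E)))
      have hTη' : Ai (R η) = Ai ((1:ℝ), (0:E)) := by simpa using hTη
      have hker : Ai (((1:ℝ), (0:E)) - R η) = 0 := by
        rw [map_sub, hTη', sub_self]
      have hperp := frechet_pinner_eq_zero hUopen hiU hfC1 hfsurj hMU (hzsC i) (hvsF i) hker
      have hsplit : (vs i).1 = pinner (vs i) (((1:ℝ), (0:E)) - R η) + pinner (vs i) (R η) := by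
        rw [← pinner_add_right]
        have he : ((1:ℝ), (0:E)) - R η + R η = ((1:ℝ), (0:E)) := by abel
        rw [he]
        simp [pinner]
      calc (vs i).1 = pinner (vs i) (R η) := by rw [hsplit, hperp, zero_add]
        _ ≤ |pinner (vs i) (R η)| := le_abs_self _
        _ ≤ (|(vs i).1| + ‖(vs i).2‖) * ‖R η‖ := abs_pinner_le _ _
        _ ≤ (|(vs i).1| + ‖(vs i).2‖) * (2 * ‖R‖ * ‖Ai ((1:ℝ), (0:E))‖) := by
            apply mul_le_mul_of_nonneg_left _ (by positivity)
            calc ‖R η‖ ≤ ‖R‖ * ‖η‖ := R.le_opNorm η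
              _ ≤ ‖R‖ * (2 * ‖Ai ((1:ℝ), (0:E))‖) :=
                  mul_le_mul_of_nonneg_left hηn (norm_nonneg R)
              _ = 2 * ‖R‖ * ‖Ai ((1:ℝ), (0:E))‖ := by ring
    have hrhs : Tendsto (fun i => (|(vs i).1| + ‖(vs i).2‖) *
        (2 * ‖R‖ * ‖fderiv ℝ f (zs i) ((1:ℝ), (0:E))‖)) atTop (𝓝 0) := by
      have h2 : Tendsto (fun i => ‖fderiv ℝ f (zs i) ((1:ℝ), (0:E))‖) atTop (𝓝 0) := by
        have h3 : Tendsto (fun i => fderiv ℝ f (zs i) ((1:ℝ), (0:E))) atTop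
            (𝓝 (A ((1:ℝ), (0:E)))) := by
          have happ := (ContinuousLinearMap.apply ℝ (EuclideanSpace ℝ (Fin c))
            ((1:ℝ), (0:E))).continuous
          exact (happ.tendsto A).comp hAt
        rw [hA10] at h3
        simpa [Function.comp_def] using (continuous_norm.tendsto (0 : EuclideanSpace ℝ (Fin c))).comp h3
      have := hvnorm.mul (h2.const_mul (2 * ‖R‖))
      simpa using this
    exact le_of_tendsto_of_tendsto hαlim hrhs hbound
  · -- manifold-with-boundary case
    by_cases hzint : ((tb, xb) : ℝ × E) ∈ interior (sgraph S)
    · have hev : ∀ᶠ i in atTop, zs i ∈ interior (sgraph S) :=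
        hzst.eventually_mem (isOpen_interior.mem_nhds hzint)
      have hvev : vs =ᶠ[atTop] (fun _ => (0 : ℝ × E)) := by
        filter_upwards [hev] with i hi
        exact frechet_eq_zero_of_interior hi (hvsF i)
      have hv0 : Tendsto vs atTop (𝓝 0) :=
        Tendsto.congr' hvev.symm tendsto_const_nhds
      have h0 : ((α, u) : ℝ × E) = 0 := tendsto_nhds_unique hvst hv0
      have hα0 : α = 0 := by
        have := congrArg Prod.fst h0
        simpa using this
      exact hα0.le
    · have hzfr : ((tb, xb) : ℝ × E) ∈ frontier (sgraph S) := by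
        rw [hclosed.frontier_eq]
        exact ⟨hz, hzint⟩
      obtain ⟨U, hUopen, hzU, f, hfC1, hfsurj, hMU⟩ := hman (tb, xb) hzfr
      set g : ℝ × E → ℝ := fun y => (EuclideanSpace.proj (0 : Fin 1)) (f y) with hgdef
      have hgC1 : ContDiffOn ℝ 1 g U := by
        rw [hgdef]
        exact (EuclideanSpace.proj (0 : Fin 1)).contDiff.comp_contDiffOn hfC1
      have hfg : ∀ y : ℝ × E, f y = 0 ↔ g y = 0 := by
        intro y
        constructor
        · intro h
          rw [hgdef]
          simp [h]
        · intro h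
          have h1 : f y 0 = 0 := by
            rw [hgdef] at h
            simpa using h
          ext j
          have hj : j = 0 := Subsingleton.elim j 0
          rw [hj]
          simpa using h1
      have hgMU : frontier (sgraph S) ∩ U = {y ∈ U | g y = 0} := by
        rw [hMU]
        ext y
        simp only [mem_setOf_eq]
        exact and_congr_right fun _ => hfg y
      have hdiff : ∀ y ∈ U, DifferentiableAt ℝ f y := fun y hy =>
        ((hfC1.contDiffAt (hUopen.mem_nhds hy)).hasStrictFDerivAt one_ne_zero).differentiableAt
      have hgfder : ∀ y ∈ U, fderiv ℝ g y
          = (EuclideanSpace.proj (0 : Fin 1)).comp (fderiv ℝ f y) := by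
        intro y hy
        have h1 : HasFDerivAt g
            ((EuclideanSpace.proj (0 : Fin 1)).comp (fderiv ℝ f y)) y := by
          rw [hgdef]
          exact ((EuclideanSpace.proj (0 : Fin 1)).hasFDerivAt).comp y (hdiff y hy).hasFDerivAt
        exact h1.fderiv
      have hproj_surj : Function.Surjective ⇑(EuclideanSpace.proj (0 : Fin 1) :
          EuclideanSpace ℝ (Fin 1) →L[ℝ] ℝ) := by
        intro r
        exact ⟨EuclideanSpace.single 0 r, by simp⟩
      have hgsurj : ∀ y ∈ U, Function.Surjective (fderivWithin ℝ g U y) := by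
        intro y hy
        rw [fderivWithin_of_isOpen hUopen hy, hgfder y hy]
        rw [ContinuousLinearMap.coe_comp']
        apply hproj_surj.comp
        have := hfsurj y hy
        rwa [fderivWithin_of_isOpen hUopen hy] at this
      rcases lt_trichotomy (fderiv ℝ g (tb, xb) ((1:ℝ), (0:E))) 0 with hβ | hβ | hβ
      · -- use -g
        have hgC1' : ContDiffOn ℝ 1 (fun y => -g y) U := hgC1.neg
        have hgMU' : frontier (sgraph S) ∩ U = {y ∈ U | -g y = 0} := by
          rw [hgMU]
          ext y
          simp [neg_eq_zero]
        have hgsurj' : ∀ y ∈ U, Function.Surjective (fderivWithin ℝ (fun y => -g y) U y) := by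
          intro y hy
          rw [fderivWithin_of_isOpen hUopen hy, fderiv_fun_neg]
          intro r
          have h1 := hgsurj y hy
          rw [fderivWithin_of_isOpen hUopen hy] at h1
          obtain ⟨q, hq⟩ := h1 (-r)
          exact ⟨q, by simp [hq]⟩
        have hβ' : 0 < fderiv ℝ (fun y => -g y) (tb, xb) ((1:ℝ), (0:E)) := by
          rw [fderiv_fun_neg]
          simp only [ContinuousLinearMap.neg_apply]
          linarith
        have hevneg := case2pos hclosed hz hzfr hδ hstat hUopen hzU hgC1' hgsurj' hgMU' hβ'
          hzsC hvsF hzst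
        exact le_of_tendsto hαlim hevneg
      · exact case2zero hclosed hUopen hzU hgC1 hgsurj hgMU hβ hzsC hvsF hzst hαlim hvnorm
      · have hevpos := case2pos hclosed hz hzfr hδ hstat hUopen hzU hgC1 hgsurj hgMU hβ
          hzsC hvsF hzst
        exact le_of_tendsto hαlim hevpos
end

section
/- Let b > a and let Γ be a collection of absolutely continuous curves, each defined on some nontrivial interval J ⊂ (a,b) and with values in ℝⁿ. Assume that for each t ∈ (a,b) there exist ε_t > 0 and γ_t ∈ Γ with dom(γ_t) = [t, t+ε_t). Then there exist a countable partition {Iₙ}_{n∈ℕ} of (a,b) into intervals Iₙ with nonempty interior and a piecewise absolutely continuous curve γ : (a,b) → ℝⁿ such that for each n ∈ ℕ there is γⁿ ∈ Γ with γ = γⁿ on Iₙ. -/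
open Set Metric Filter MeasureTheory
open scoped ENNReal RealInnerProductSpace Topology Pointwise

section Aux17


variable {E : Type*} [NormedAddCommGroup E] [InnerProductSpace ℝ E]

lemma absContOn_mono17 {γ : ℝ → E} {A B : Set ℝ} (h : AbsContOn γ A) (hBA : B ⊆ A) :
    AbsContOn γ B := by
  obtain ⟨g, hg, hf⟩ := h
  exact ⟨g, hg.mono_set hBA, fun s hs t ht => hf s (hBA hs) t (hBA ht)⟩

lemma absContOn_congr17 {γ f : ℝ → E} {B : Set ℝ} (h : AbsContOn f B) (he : Set.EqOn γ f B) :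
    AbsContOn γ B := by
  obtain ⟨g, hg, hf⟩ := h
  exact ⟨g, hg, fun s hs t ht => by rw [he hs, he ht]; exact hf s hs t ht⟩

lemma diff_interior_countable17 {J : Set ℝ} (hJ : J.OrdConnected) :
    (J \ interior J).Countable := by
  have h1 : (J \ interior J) ⊆ (J ∩ {x | ∀ y ∈ J, y ≤ x}) ∪ (J ∩ {x | ∀ y ∈ J, x ≤ y}) := by
    rintro x ⟨hxJ, hxi⟩
    by_cases hup : ∀ y ∈ J, y ≤ x
    · exact Or.inl ⟨hxJ, hup⟩
    by_cases hlo : ∀ y ∈ J, x ≤ y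
    · exact Or.inr ⟨hxJ, hlo⟩
    push_neg at hup hlo
    obtain ⟨y, hy, hxy⟩ := hup
    obtain ⟨z, hz, hzx⟩ := hlo
    exact absurd (mem_interior.mpr ⟨Ioo z y, (Ioo_subset_Icc_self).trans (hJ.out hz hy),
      isOpen_Ioo, ⟨hzx, hxy⟩⟩) hxi
  have h2 : (J ∩ {x | ∀ y ∈ J, y ≤ x}).Subsingleton := fun x hx x' hx' =>
    le_antisymm (hx'.2 x hx.1) (hx.2 x' hx'.1)
  have h3 : (J ∩ {x | ∀ y ∈ J, x ≤ y}).Subsingleton := fun x hx x' hx' =>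
    le_antisymm (hx.2 x' hx'.1) (hx'.2 x hx.1)
  exact Countable.mono h1 ((h2.countable).union (h3.countable))

/-- Zorn tiling lemma: any `[s,e) ⊆ (a,b)` can be tiled by pieces matching members of `Γ`. -/
lemma tile17 (a b : ℝ) (Γ : Set ((ℝ → E) × Set ℝ))
    (hcover : ∀ t ∈ Ioo a b, ∃ ε : ℝ, 0 < ε ∧ ∃ g : ℝ → E, (g, Ico t (t + ε)) ∈ Γ)
    (s e : ℝ) (has : a < s) (hse : s < e) (heb : e ≤ b) :
    ∃ (P : Set (Set ℝ)) (γ : ℝ → E),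
      (∀ J ∈ P, J.OrdConnected ∧ (interior J).Nonempty ∧
        ∃ p ∈ Γ, J ⊆ p.2 ∧ Set.EqOn γ p.1 J) ∧
      ⋃₀ P = Ico s e ∧ P.PairwiseDisjoint id := by
  classical
  set Q : ℝ × Set (Set ℝ) × (ℝ → E) → Prop := fun x =>
    s < x.1 ∧ x.1 ≤ e ∧ ⋃₀ x.2.1 = Ico s x.1 ∧ x.2.1.PairwiseDisjoint id ∧
      ∀ J ∈ x.2.1, J.OrdConnected ∧ (interior J).Nonempty ∧
        ∃ p ∈ Γ, J ⊆ p.2 ∧ Set.EqOn x.2.2 p.1 J with hQdef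
  -- seed
  obtain ⟨ε₀, hε₀, g₀, hg₀⟩ := hcover s ⟨has, lt_of_lt_of_le hse heb⟩
  have hseed : Q (min (s + ε₀) e, {Ico s (min (s + ε₀) e)}, g₀) := by
    refine ⟨lt_min (by linarith) hse, min_le_right _ _, by simp, pairwiseDisjoint_singleton _ _, ?_⟩
    rintro J hJ
    rw [mem_singleton_iff] at hJ
    subst hJ
    exact ⟨ordConnected_Ico, by
        rw [interior_Ico]; exact nonempty_Ioo.mpr (lt_min (by linarith) hse),
      ⟨(g₀, Ico s (s + ε₀)), hg₀, Ico_subset_Ico_right (min_le_left _ _), fun t _ => rfl⟩⟩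
  set R : {x // Q x} → {x // Q x} → Prop := fun x y =>
    x.1.1 ≤ y.1.1 ∧ x.1.2.1 ⊆ y.1.2.1 ∧ Set.EqOn x.1.2.2 y.1.2.2 (Ico s x.1.1) with hRdef
  have htrans : ∀ {x y z : {x // Q x}}, R x y → R y z → R x z := by
    rintro x y z ⟨h1, h2, h3⟩ ⟨h4, h5, h6⟩
    exact ⟨h1.trans h4, h2.trans h5, fun t ht => (h3 ht).trans (h6 ⟨ht.1, lt_of_lt_of_le ht.2 h1⟩)⟩
  have hchains : ∀ C : Set {x // Q x}, IsChain R C → ∃ ub, ∀ x ∈ C, R x ub := by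
    intro C hC
    rcases C.eq_empty_or_nonempty with rfl | ⟨x₀, hx₀⟩
    · exact ⟨⟨_, hseed⟩, by simp⟩
    have hTbdd : BddAbove ((fun x : {x // Q x} => x.1.1) '' C) := by
      refine ⟨e, ?_⟩; rintro _ ⟨x, _, rfl⟩; exact x.2.2.1
    have hTne : ((fun x : {x // Q x} => x.1.1) '' C).Nonempty := ⟨_, x₀, hx₀, rfl⟩
    set cs := sSup ((fun x : {x // Q x} => x.1.1) '' C) with hcs
    set Ps : Set (Set ℝ) := {J | ∃ x ∈ C, J ∈ x.1.2.1} with hPs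
    set γs : ℝ → E := fun t =>
      if h : ∃ x, x ∈ C ∧ t ∈ Ico s x.1.1 then h.choose.1.2.2 t else 0 with hγs
    have key : ∀ t (h : ∃ x, x ∈ C ∧ t ∈ Ico s x.1.1), ∀ y ∈ C, t ∈ Ico s y.1.1 →
        γs t = y.1.2.2 t := by
      intro t h y hy hty
      have hspec := h.choose_spec
      have : γs t = h.choose.1.2.2 t := by rw [hγs]; exact dif_pos h
      rw [this]
      rcases eq_or_ne h.choose y with rfl | hne
      · rfl
      rcases hC hspec.1 hy hne with hr | hr
      · exact hr.2.2 hspec.2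
      · exact (hr.2.2 hty).symm
    have hQs : Q (cs, Ps, γs) := by
      have hmem : ∀ x : {x // Q x}, x ∈ C → x.1.1 ≤ cs :=
        fun x hx => le_csSup hTbdd ⟨x, hx, rfl⟩
      refine ⟨lt_of_lt_of_le x₀.2.1 (hmem x₀ hx₀), csSup_le hTne (by rintro _ ⟨x, _, rfl⟩; exact x.2.2.1), ?_, ?_, ?_⟩
      · ext t
        constructor
        · rintro ⟨J, ⟨x, hxC, hJx⟩, htJ⟩
          have : t ∈ ⋃₀ x.1.2.1 := ⟨J, hJx, htJ⟩
          rw [x.2.2.2.1] at this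
          exact ⟨this.1, lt_of_lt_of_le this.2 (hmem x hxC)⟩
        · rintro ⟨hst, htc⟩
          obtain ⟨_, ⟨x, hxC, rfl⟩, hlt⟩ := exists_lt_of_lt_csSup hTne htc
          have : t ∈ ⋃₀ x.1.2.1 := by rw [x.2.2.2.1]; exact ⟨hst, hlt⟩
          obtain ⟨J, hJ, htJ⟩ := this
          exact ⟨J, ⟨x, hxC, hJ⟩, htJ⟩
      · rintro J ⟨x, hxC, hJx⟩ J' ⟨y, hyC, hJy⟩ hne
        rcases eq_or_ne x y with rfl | hxy
        · exact x.2.2.2.2.1 hJx hJy hne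
        rcases hC hxC hyC hxy with hr | hr
        · exact y.2.2.2.2.1 (hr.2.1 hJx) hJy hne
        · exact x.2.2.2.2.1 hJx (hr.2.1 hJy) hne
      · rintro J ⟨x, hxC, hJx⟩
        obtain ⟨ho, hi, p, hpΓ, hJp, heq⟩ := x.2.2.2.2.2 J hJx
        refine ⟨ho, hi, p, hpΓ, hJp, fun t ht => ?_⟩
        have htx : t ∈ Ico s x.1.1 := by
          rw [← x.2.2.2.1]; exact ⟨J, hJx, ht⟩
        show γs t = p.1 t
        rw [key t ⟨x, hxC, htx⟩ x hxC htx]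
        exact heq ht
    refine ⟨⟨_, hQs⟩, fun x hx => ⟨le_csSup hTbdd ⟨x, hx, rfl⟩, fun J hJ => ⟨x, hx, hJ⟩, ?_⟩⟩
    intro t ht
    exact (key t ⟨x, hx, ht⟩ x hx ht).symm
  obtain ⟨m, hm⟩ := exists_maximal_of_chains_bounded hchains (fun {x y z} => htrans)
  -- maximal element reaches e
  have hce : m.1.1 = e := by
    by_contra hne
    have hclt : m.1.1 < e := lt_of_le_of_ne m.2.2.1 hne
    have hcab : m.1.1 ∈ Ioo a b := ⟨has.trans m.2.1, lt_of_lt_of_le hclt heb⟩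
    obtain ⟨ε, hε, g, hg⟩ := hcover m.1.1 hcab
    set c' := min (m.1.1 + ε) e with hc'
    have hcc' : m.1.1 < c' := lt_min (by linarith) hclt
    set J₀ : Set ℝ := Ico m.1.1 c' with hJ₀
    set γ' : ℝ → E := fun t => if t < m.1.1 then m.1.2.2 t else g t with hγ'
    have hQ' : Q (c', insert J₀ m.1.2.1, γ') := by
      refine ⟨m.2.1.trans hcc', min_le_right _ _, ?_, ?_, ?_⟩
      · rw [sUnion_insert, m.2.2.2.1, union_comm]
        exact Ico_union_Ico_eq_Ico (le_of_lt m.2.1) (le_of_lt hcc')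
      · refine m.2.2.2.2.1.insert ?_
        intro J hJ _
        have hJsub : J ⊆ Ico s m.1.1 := by rw [← m.2.2.2.1]; exact fun t ht => ⟨J, hJ, ht⟩
        rw [Set.disjoint_left]
        intro t htJ₀ htJ
        exact absurd (hJsub htJ).2 (not_lt.mpr htJ₀.1)
      · rintro J hJ
        rcases mem_insert_iff.mp hJ with rfl | hJm
        · refine ⟨ordConnected_Ico, by rw [interior_Ico]; exact nonempty_Ioo.mpr hcc',
            ⟨(g, Ico m.1.1 (m.1.1 + ε)), hg, Ico_subset_Ico_right (min_le_left _ _), ?_⟩⟩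
          intro t ht
          simp only [hγ', if_neg (not_lt.mpr ht.1)]
        · obtain ⟨ho, hi, p, hpΓ, hJp, heq⟩ := m.2.2.2.2.2 J hJm
          refine ⟨ho, hi, p, hpΓ, hJp, fun t ht => ?_⟩
          have : t ∈ Ico s m.1.1 := by rw [← m.2.2.2.1]; exact ⟨J, hJm, ht⟩
          simp only [hγ', if_pos this.2]
          exact heq ht
    have hRm : R m ⟨_, hQ'⟩ := by
      refine ⟨le_of_lt hcc', subset_insert _ _, fun t ht => ?_⟩
      simp only [hγ', if_pos ht.2]
    exact absurd ((hm _ hRm).1) (not_le.mpr hcc')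
  refine ⟨m.1.2.1, m.1.2.2, m.2.2.2.2.2, ?_, m.2.2.2.2.1⟩
  rw [m.2.2.2.1, hce]

end Aux17

/-- Proposition: concatenation: if a family `Γ` of absolutely
continuous curves on subintervals of `(a,b)` contains, for every `t ∈ (a,b)`, a curve
defined on some `[t,t+ε)`, then there are a countable partition of `(a,b)` into
intervals with nonempty interior and a piecewise absolutely continuous curve agreeing
with a member of `Γ` on each of them. -/
theorem statement17 {E : Type*} [NormedAddCommGroup E] [InnerProductSpace ℝ E]
    [FiniteDimensional ℝ E] (a b : ℝ) (hab : a < b)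
    (Γ : Set ((ℝ → E) × Set ℝ))
    (hΓ : ∀ p ∈ Γ, p.2 ⊆ Ioo a b ∧ p.2.OrdConnected ∧ p.2.Nontrivial ∧
      AbsContOn p.1 p.2)
    (hcover : ∀ t ∈ Ioo a b, ∃ ε : ℝ, 0 < ε ∧ ∃ g : ℝ → E, (g, Ico t (t + ε)) ∈ Γ) :
    ∃ P : Set (Set ℝ), P.Countable ∧
      (∀ J ∈ P, J.OrdConnected ∧ (interior J).Nonempty) ∧
      ⋃₀ P = Ioo a b ∧ P.PairwiseDisjoint id ∧
      ∃ γ : ℝ → E, PiecewiseAC γ (Ioo a b) ∧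
        ∀ J ∈ P, ∃ p ∈ Γ, EqOn γ p.1 J := by
  classical
  have hba : (0:ℝ) < b - a := by linarith
  set s : ℕ → ℝ := fun n => a + (b - a) / 2 ^ n with hsdef
  have hs0 : s 0 = b := by simp [hsdef]
  have hspos : ∀ n, a < s n := by
    intro n
    have : (0:ℝ) < (b - a) / 2 ^ n := by positivity
    simp only [hsdef]; linarith
  have hsle : ∀ n, s n ≤ b := by
    intro n
    have h1 : (b - a) / 2 ^ n ≤ (b - a) := by
      exact div_le_self (le_of_lt hba) (one_le_pow₀ (by norm_num))
    simp only [hsdef]; linarith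
  have hsanti : StrictAnti s := by
    apply strictAnti_nat_of_succ_lt
    intro n
    have h1 : (b - a) / 2 ^ (n+1) < (b - a) / 2 ^ n := by
      apply div_lt_div_of_pos_left hba (by positivity)
      exact pow_lt_pow_right₀ (by norm_num) (Nat.lt_succ_self n)
    simp only [hsdef]; linarith
  have H : ∀ n : ℕ, ∃ (P : Set (Set ℝ)) (γ : ℝ → E),
      (∀ J ∈ P, J.OrdConnected ∧ (interior J).Nonempty ∧
        ∃ p ∈ Γ, J ⊆ p.2 ∧ Set.EqOn γ p.1 J) ∧
      ⋃₀ P = Ico (s (n+1)) (s n) ∧ P.PairwiseDisjoint id :=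
    fun n => tile17 a b Γ hcover (s (n+1)) (s n) (hspos _) (hsanti (Nat.lt_succ_self n)) (hsle n)
  choose P γn hprops hunion hdisj using H
  set I : ℕ → Set ℝ := fun n => Ico (s (n+1)) (s n) with hIdef
  have hIdisj : ∀ {n m : ℕ}, n ≠ m → Disjoint (I n) (I m) := by
    have aux : ∀ {n m : ℕ}, n < m → Disjoint (I n) (I m) := by
      intro n m h
      rw [Set.disjoint_left]
      rintro t ⟨ht1, _⟩ ⟨_, ht4⟩
      exact absurd (lt_of_lt_of_le ht4 (hsanti.antitone (Nat.succ_le_of_lt h))) (not_lt.mpr ht1)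
    intro n m h
    rcases h.lt_or_gt with h' | h'
    · exact aux h'
    · exact (aux h').symm
  have hIunion : (⋃ n, I n) = Ioo a b := by
    ext t
    simp only [mem_iUnion]
    constructor
    · rintro ⟨n, ht1, ht2⟩
      exact ⟨lt_of_lt_of_le (hspos (n+1)) ht1, lt_of_lt_of_le ht2 (hsle n)⟩
    · rintro ⟨hta, htb⟩
      have hex : ∃ n, s (n + 1) ≤ t := by
        obtain ⟨n, hn⟩ := exists_pow_lt_of_lt_one
          (div_pos (show (0:ℝ) < t - a by linarith) hba) (show (1:ℝ)/2 < 1 by norm_num)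
        refine ⟨n, le_trans (hsanti.antitone (Nat.le_succ n)) ?_⟩
        have h2 : ((1:ℝ)/2) ^ n * (b - a) < t - a := (lt_div_iff₀ hba).mp hn
        have h3 : (b - a) / 2 ^ n = ((1:ℝ)/2) ^ n * (b - a) := by
          rw [div_pow, one_pow, div_mul_eq_mul_div, one_mul]
        show a + (b - a) / 2 ^ n ≤ t
        rw [h3]; linarith
      refine ⟨Nat.find hex, Nat.find_spec hex, ?_⟩
      rcases hk : Nat.find hex with _ | k
      · show t < s 0; rw [hs0]; exact htb
      · by_contra h
        push_neg at h
        exact Nat.find_min hex (hk ▸ Nat.lt_succ_self k) h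
  set PP : Set (Set ℝ) := ⋃ n, P n with hPPdef
  set γ : ℝ → E := fun t => if h : ∃ n, t ∈ I n then γn (Nat.find h) t else 0 with hγdef
  have hPsubI : ∀ n, ∀ J ∈ P n, J ⊆ I n := by
    intro n J hJ
    have h := subset_sUnion_of_mem hJ
    rw [hunion n] at h
    exact h
  have hγeq : ∀ n, ∀ t ∈ I n, γ t = γn n t := by
    intro n t ht
    have h : ∃ m, t ∈ I m := ⟨n, ht⟩
    have hfind : Nat.find h = n := by
      by_contra hne
      exact Set.disjoint_left.mp (hIdisj hne) (Nat.find_spec h) ht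
    rw [hγdef]
    simp only [dif_pos h, hfind]
  have hPPdisj : PP.PairwiseDisjoint id := by
    rintro J hJ J' hJ' hne
    obtain ⟨n, hJn⟩ := mem_iUnion.mp hJ
    obtain ⟨m, hJm⟩ := mem_iUnion.mp hJ'
    rcases eq_or_ne n m with rfl | hnm
    · exact hdisj n hJn hJm hne
    · exact Disjoint.mono (hPsubI n J hJn) (hPsubI m J' hJm) (hIdisj hnm)
  have hPPunion : ⋃₀ PP = Ioo a b := by
    rw [hPPdef, sUnion_iUnion, ← hIunion]
    exact iUnion_congr hunion
  have hPPprops : ∀ J ∈ PP, J.OrdConnected ∧ (interior J).Nonempty ∧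
      ∃ p ∈ Γ, J ⊆ p.2 ∧ Set.EqOn γ p.1 J := by
    rintro J hJ
    obtain ⟨n, hJn⟩ := mem_iUnion.mp hJ
    obtain ⟨ho, hi, p, hpΓ, hJp, heq⟩ := hprops n J hJn
    refine ⟨ho, hi, p, hpΓ, hJp, fun t ht => ?_⟩
    rw [hγeq n t (hPsubI n J hJn ht)]
    exact heq ht
  have hPPcount : PP.Countable :=
    countable_iUnion fun n => (hdisj n).countable_of_nonempty_interior
      (fun J hJ => (hprops n J hJ).2.1)
  have hPPsub : ∀ J ∈ PP, J ⊆ Ioo a b := by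
    intro J hJ
    rw [← hPPunion]
    exact subset_sUnion_of_mem hJ
  -- now PiecewiseAC
  set O : Set ℝ := ⋃ J ∈ PP, interior J with hOdef
  have hOopen : IsOpen O := isOpen_biUnion fun _ _ => isOpen_interior
  set D : Set ℝ := Icc a b \ O with hDdef
  have hOsub : O ⊆ Ioo a b := by
    rintro t ht
    obtain ⟨J, hJ, htJ⟩ := mem_iUnion₂.mp ht
    exact hPPsub J hJ (interior_subset htJ)
  have hIooD : Ioo a b \ D = O := by
    ext t
    constructor
    · rintro ⟨ht, htD⟩
      by_contra htO
      exact htD ⟨⟨le_of_lt ht.1, le_of_lt ht.2⟩, htO⟩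
    · intro ht
      exact ⟨hOsub ht, fun hD => hD.2 ht⟩
  -- endpoints of pieces are not in O
  have hJne : ∀ J ∈ PP, J.Nonempty := fun J hJ =>
    ((hPPprops J hJ).2.1).mono interior_subset
  have hJbddA : ∀ J ∈ PP, BddAbove J := fun J hJ => (bddAbove_Ioo).mono (hPPsub J hJ)
  have hJbddB : ∀ J ∈ PP, BddBelow J := fun J hJ => (bddBelow_Ioo).mono (hPPsub J hJ)
  have hsupO : ∀ J ∈ PP, sSup J ∉ O := by
    rintro J hJ h
    obtain ⟨J', hJ', hmem⟩ := mem_iUnion₂.mp h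
    obtain ⟨η, hη, hball⟩ := Metric.isOpen_iff.mp isOpen_interior _ hmem
    obtain ⟨j, hjJ, hjlt⟩ := exists_lt_of_lt_csSup (hJne J hJ)
      (show sSup J - η < sSup J by linarith)
    have hjle : j ≤ sSup J := le_csSup (hJbddA J hJ) hjJ
    have hjJ' : j ∈ J' := interior_subset (hball (by
      rw [mem_ball, Real.dist_eq, abs_lt]; constructor <;> linarith))
    rcases eq_or_ne J J' with rfl | hne
    · have h2 : sSup J + η/2 ∈ J := interior_subset (hball (by
        rw [mem_ball, Real.dist_eq, abs_lt]; constructor <;> linarith))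
      have := le_csSup (hJbddA J hJ) h2
      linarith
    · exact Set.disjoint_left.mp (hPPdisj hJ hJ' hne) hjJ hjJ'
  have hinfO : ∀ J ∈ PP, sInf J ∉ O := by
    rintro J hJ h
    obtain ⟨J', hJ', hmem⟩ := mem_iUnion₂.mp h
    obtain ⟨η, hη, hball⟩ := Metric.isOpen_iff.mp isOpen_interior _ hmem
    obtain ⟨j, hjJ, hjlt⟩ := exists_lt_of_csInf_lt (hJne J hJ)
      (show sInf J < sInf J + η by linarith)
    have hjle : sInf J ≤ j := csInf_le (hJbddB J hJ) hjJ
    have hjJ' : j ∈ J' := interior_subset (hball (by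
      rw [mem_ball, Real.dist_eq, abs_lt]; constructor <;> linarith))
    rcases eq_or_ne J J' with rfl | hne
    · have h2 : sInf J - η/2 ∈ J := interior_subset (hball (by
        rw [mem_ball, Real.dist_eq, abs_lt]; constructor <;> linarith))
      have := csInf_le (hJbddB J hJ) h2
      linarith
    · exact Set.disjoint_left.mp (hPPdisj hJ hJ' hne) hjJ hjJ'
  refine ⟨PP, hPPcount, fun J hJ => ⟨(hPPprops J hJ).1, (hPPprops J hJ).2.1⟩, hPPunion,
    hPPdisj, γ, ⟨D, isClosed_Icc.sdiff hOopen, ?_, ?_⟩,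
    fun J hJ => by
      obtain ⟨_, _, p, hpΓ, _, heq⟩ := hPPprops J hJ
      exact ⟨p, hpΓ, heq⟩⟩
  · -- countable
    have hsub : D ⊆ insert a (insert b (⋃ J ∈ PP, (J \ interior J))) := by
      rintro t ⟨⟨hta, htb⟩, htO⟩
      rcases eq_or_lt_of_le hta with rfl | hta'
      · exact mem_insert _ _
      rcases eq_or_lt_of_le htb with rfl | htb'
      · exact mem_insert_of_mem _ (mem_insert _ _)
      have : t ∈ ⋃₀ PP := by rw [hPPunion]; exact ⟨hta', htb'⟩
      obtain ⟨J, hJ, htJ⟩ := this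
      refine mem_insert_of_mem _ (mem_insert_of_mem _ (mem_iUnion₂.mpr ⟨J, hJ, htJ, ?_⟩))
      intro hint
      exact htO (mem_iUnion₂.mpr ⟨J, hJ, hint⟩)
    exact Countable.mono hsub (Countable.insert _ (Countable.insert _
      (Countable.biUnion hPPcount fun J hJ => diff_interior_countable17 (hPPprops J hJ).1)))
  · -- AC on components
    intro t ht
    rw [hIooD] at ht ⊢
    obtain ⟨J, hJ, htJ⟩ := mem_iUnion₂.mp ht
    have htJ' : t ∈ J := interior_subset htJ
    set C := connectedComponentIn O t with hCdef
    have hCO : C ⊆ O := connectedComponentIn_subset _ _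
    have hCord : C.OrdConnected := isPreconnected_connectedComponentIn.ordConnected
    have htC : t ∈ C := mem_connectedComponentIn ht
    obtain ⟨hoJ, _, p, hpΓ, hJp, heq⟩ := hPPprops J hJ
    have hCJ : C ⊆ J := by
      intro x hxC
      by_contra hxJ
      rcases lt_or_gt_of_ne (show x ≠ t from fun h => hxJ (h ▸ htJ')) with hxt | htx
      · have h1 : x ≤ sInf J := le_csInf (hJne J hJ) (by
          intro j hj
          by_contra hc
          push_neg at hc
          exact hxJ (hoJ.out hj htJ' ⟨le_of_lt hc, le_of_lt hxt⟩))
        have h2 : sInf J ≤ t := csInf_le (hJbddB J hJ) htJ'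
        exact hinfO J hJ (hCO (hCord.out hxC htC ⟨h1, h2⟩))
      · have h1 : sSup J ≤ x := csSup_le (hJne J hJ) (by
          intro j hj
          by_contra hc
          push_neg at hc
          exact hxJ (hoJ.out htJ' hj ⟨le_of_lt htx, le_of_lt hc⟩))
        have h2 : t ≤ sSup J := le_csSup (hJbddA J hJ) htJ'
        exact hsupO J hJ (hCO (hCord.out htC hxC ⟨h2, h1⟩))
    exact absContOn_congr17 (absContOn_mono17 ((hΓ p hpΓ).2.2.2) (hCJ.trans hJp))
      (fun x hx => heq (hCJ hx))
end
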